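/- arXiv:1911.01694 — 8 statements merged into one kernel-verified Lean document; each statement's English description precedes it below -/
import Mathlib

section
/- Let d ≥ 1 and n > d be integers and let δ ∈ (0,1). Let m be a positive integer satisfying m − √(2·e·m·ln(2/δ)) ≥ e·d·ln(2n/δ). Let M be an m×n RID random matrix with parameter p = e^{−1/d}. Then for every set I ⊆ {1,…,n} with |I| ≤ d, the probability that M is (n,I)-disjunct is at least 1 − δ. -/
open scoped Classical

noncomputable section

/-- A 0-1 matrix `M` (with `true` = 1) is `(n,I)`-disjunct if for every item `i ∉ I`
there is a row containing `i` but no element of `I`. -/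
def Disjunct {m n : ℕ} (I : Finset (Fin n)) (M : Fin m → Fin n → Bool) : Prop :=
  ∀ i : Fin n, i ∉ I → ∃ t : Fin m, M t i = true ∧ ∀ j ∈ I, M t j = false

/-- Probability of the event `pred` for an `m × n` RID random matrix with parameter `p`:
entries are i.i.d., equal to `0` (`false`) with probability `p` and `1` (`true`) with
probability `1 - p`. -/
def ridProb (m n : ℕ) (p : ℝ) (pred : (Fin m → Fin n → Bool) → Prop) : ℝ :=
  ∑ M : Fin m → Fin n → Bool,
    (if pred M then ∏ t : Fin m, ∏ j : Fin n, (if M t j then 1 - p else p) else 0)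

/-!
Call a row of `M` *avoiding* if it vanishes on `I`. Rows are independent, and each is avoiding
with probability `c = p ^ #I ≥ e⁻¹`. If `M` is not `I`-disjunct, some `i ∉ I` vanishes on every
avoiding row. Put `L = log (2n/δ)` and `A = log (2/δ)`, and split on the number `G` of avoiding
rows. The event `G ≤ dL` is a lower tail of a binomial variable with mean `mc`. A Chernoff bound
at `θ = √(2emA)/m` gives it probability at most `e^(-A) = δ/2`, the lower bound on `m` being what
makes the exponent at most `-A`. For a fixed `i`, the event "`i` vanishes on every avoiding row and
`G ≥ dL`" has probability at most `p ^ (dL) = δ/(2n)`. To see this, reweight every avoiding row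
by `p⁻¹`: the total mass is preserved, because an avoiding row also vanishes at `i` with
probability `p`. A union bound over `i` then bounds the failure probability by `δ`.
-/

open Finset Real

section Row

variable {α : Type*} [Fintype α] {p : ℝ}

def rowWeight (p : ℝ) (v : α → Bool) : ℝ :=
  ∏ a, if v a then 1 - p else p

def Avoids (I : Finset α) (v : α → Bool) : Prop :=
  ∀ j ∈ I, v j = false

lemma rowWeight_nonneg (hp0 : 0 ≤ p) (hp1 : p ≤ 1) (v : α → Bool) : 0 ≤ rowWeight p v :=
  prod_nonneg fun a _ => by cases v a <;> simp [hp0, hp1]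

variable [DecidableEq α]

lemma sum_rowWeight_mul_prod (f : α → Bool → ℝ) :
    ∑ v : α → Bool, rowWeight p v * ∏ a, f a (v a) =
      ∏ a, ((1 - p) * f a true + p * f a false) := by
  simp only [rowWeight, ← prod_mul_distrib]
  rw [← Fintype.prod_sum fun a b => (if b then 1 - p else p) * f a b]
  simp

lemma sum_rowWeight : ∑ v : α → Bool, rowWeight p v = 1 := by
  simpa using sum_rowWeight_mul_prod (p := p) fun _ _ => (1 : ℝ)

lemma sum_rowWeight_mul_ite (S : Finset α) (x y : ℝ) :
    ∑ v : α → Bool, rowWeight p v * (if Avoids S v then x else y) =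
      p ^ #S * x + (1 - p ^ #S) * y := by
  have hind : ∀ v : α → Bool, (if Avoids S v then x else y) =
      y + (x - y) * ∏ a, if a ∈ S → v a = false then 1 else 0 := by
    intro v
    rw [Fintype.prod_boole]
    split_ifs <;> simp_all [Avoids]
  have hprod : ∑ v : α → Bool, rowWeight p v * ∏ a, (if a ∈ S → v a = false then 1 else 0) =
      p ^ #S := by
    calc _ = ∏ a, ((1 - p) * (if a ∈ S → true = false then 1 else 0) +
            p * if a ∈ S → false = false then 1 else 0) :=
          sum_rowWeight_mul_prod fun a b => if a ∈ S → b = false then (1 : ℝ) else 0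
      _ = ∏ a, if a ∈ S then p else 1 :=
          prod_congr rfl fun a _ => by by_cases ha : a ∈ S <;> simp [ha]
      _ = p ^ #S := by rw [Fintype.prod_ite_mem, prod_const]
  simp only [hind, mul_add, mul_left_comm _ (x - y), sum_add_distrib, ← sum_mul, ← mul_sum,
    sum_rowWeight, hprod]
  ring

end Row

lemma exp_neg_le_one_sub_add_sq_div_two {x : ℝ} (hx : 0 ≤ x) : exp (-x) ≤ 1 - x + x ^ 2 / 2 := by
  have hq := quadratic_le_exp_of_nonneg hx
  have hinv : exp (-x) * exp x = 1 := by rw [← exp_add, neg_add_cancel, exp_zero]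
  nlinarith [exp_pos (-x), sq_nonneg (x ^ 2)]

lemma chernoff_exponent_le {m c x A : ℝ} (hm : 0 < m) (hc : exp (-1) ≤ c) (hx : 0 ≤ x)
    (hA : 0 ≤ A) (h : exp 1 * x ≤ m - √(2 * exp 1 * m * A)) :
    √(2 * exp 1 * m * A) / m * x - m * c * (1 - exp (-(√(2 * exp 1 * m * A) / m))) ≤ -A := by
  set r := √(2 * exp 1 * m * A)
  have he : 0 < exp 1 := exp_pos 1
  have hr0 : 0 ≤ r := sqrt_nonneg _
  have hr2 : r ^ 2 = 2 * exp 1 * m * A := sq_sqrt (by positivity)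
  have hrm : r ≤ m := by nlinarith
  set θ := r / m
  have hθ0 : 0 ≤ θ := by positivity
  have hθ1 : θ ≤ 1 := (div_le_one hm).2 hrm
  have hgain : θ - θ ^ 2 / 2 ≤ 1 - exp (-θ) := by
    linarith [exp_neg_le_one_sub_add_sq_div_two hθ0]
  have hc' : (exp 1)⁻¹ ≤ c := by rwa [← exp_neg]
  have hlow : m * (θ - θ ^ 2 / 2) / exp 1 ≤ m * c * (1 - exp (-θ)) := by
    rw [div_eq_mul_inv, mul_right_comm]
    exact mul_le_mul (mul_le_mul_of_nonneg_left hc' hm.le) hgain (by nlinarith)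
      (mul_nonneg hm.le ((inv_pos.2 he).le.trans hc'))
  have hlow' : m * (θ - θ ^ 2 / 2) / exp 1 = r / exp 1 - A := by
    simp only [θ]
    field_simp
    linear_combination (-1 : ℝ) * hr2
  have hθx : θ * x ≤ r / exp 1 - 2 * A := by
    have key : r * (exp 1 * x) ≤ r * (m - r) := mul_le_mul_of_nonneg_left h hr0
    simp only [θ]
    rw [div_mul_eq_mul_div, div_le_iff₀ hm, sub_mul, div_mul_eq_mul_div, le_sub_iff_add_le,
      le_div_iff₀ he]
    nlinarith
  linarith

lemma exp_neg_log_div {a b : ℝ} (ha : 0 < a) (hb : 0 < b) : exp (-log (a / b)) = b / a := by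
  rw [exp_neg, exp_log (div_pos ha hb), inv_div]

section Matrix

variable {m n : ℕ} {p : ℝ}

lemma ridProb_eq_sum (P : (Fin m → Fin n → Bool) → Prop) :
    ridProb m n p P = ∑ M, if P M then ∏ t, rowWeight p (M t) else 0 :=
  rfl

lemma prod_rowWeight_nonneg (hp0 : 0 ≤ p) (hp1 : p ≤ 1) (M : Fin m → Fin n → Bool) :
    0 ≤ ∏ t, rowWeight p (M t) :=
  prod_nonneg fun _ _ => rowWeight_nonneg hp0 hp1 _

lemma ridProb_add_ridProb_not (P : (Fin m → Fin n → Bool) → Prop) :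
    ridProb m n p P + ridProb m n p (fun M => ¬ P M) = 1 := by
  simp only [ridProb_eq_sum, ← sum_add_distrib]
  calc _ = ∑ M : Fin m → Fin n → Bool, ∏ t, rowWeight p (M t) :=
        sum_congr rfl fun M _ => by split_ifs <;> simp_all
    _ = 1 := by
        rw [← Fintype.prod_sum fun (_ : Fin m) v => rowWeight p v]
        simp [sum_rowWeight]

lemma ridProb_le_add (hp0 : 0 ≤ p) (hp1 : p ≤ 1) {P Q R : (Fin m → Fin n → Bool) → Prop}
    (h : ∀ M, P M → Q M ∨ R M) : ridProb m n p P ≤ ridProb m n p Q + ridProb m n p R := by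
  simp only [ridProb_eq_sum, ← sum_add_distrib]
  refine sum_le_sum fun M _ => ?_
  have hw := prod_rowWeight_nonneg hp0 hp1 M
  by_cases hP : P M
  · rcases h M hP with hQ | hR <;> split_ifs <;> linarith
  · split_ifs <;> linarith

lemma ridProb_le_sum (hp0 : 0 ≤ p) (hp1 : p ≤ 1) {ι : Type*} (s : Finset ι)
    {P : (Fin m → Fin n → Bool) → Prop} {Q : ι → (Fin m → Fin n → Bool) → Prop}
    (h : ∀ M, P M → ∃ i ∈ s, Q i M) : ridProb m n p P ≤ ∑ i ∈ s, ridProb m n p (Q i) := by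
  simp only [ridProb_eq_sum]
  rw [sum_comm]
  refine sum_le_sum fun M _ => ?_
  have hw := prod_rowWeight_nonneg hp0 hp1 M
  have hterm : ∀ j ∈ s, 0 ≤ if Q j M then ∏ t, rowWeight p (M t) else 0 := fun j _ => by
    split_ifs <;> simp [hw]
  split_ifs with hP
  · obtain ⟨i, hi, hQ⟩ := h M hP
    calc ∏ t, rowWeight p (M t) = if Q i M then ∏ t, rowWeight p (M t) else 0 := (if_pos hQ).symm
      _ ≤ _ := single_le_sum hterm hi
  · exact sum_nonneg hterm

-- Markov's inequality for a product over rows, whose mean factorises as the rows are independent.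
lemma ridProb_le_mul_pow (hp0 : 0 ≤ p) (hp1 : p ≤ 1) {P : (Fin m → Fin n → Bool) → Prop}
    {K : ℝ} (hK : 0 ≤ K) (g : (Fin n → Bool) → ℝ) (hg : ∀ v, 0 ≤ g v)
    (h : ∀ M, P M → 1 ≤ K * ∏ t, g (M t)) :
    ridProb m n p P ≤ K * (∑ v, rowWeight p v * g v) ^ m := by
  calc ridProb m n p P ≤ ∑ M : Fin m → Fin n → Bool, K * ∏ t, (rowWeight p (M t) * g (M t)) := by
        rw [ridProb_eq_sum]
        refine sum_le_sum fun M _ => ?_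
        have hw := prod_rowWeight_nonneg hp0 hp1 M
        rw [prod_mul_distrib, mul_left_comm]
        split_ifs with hP
        · exact le_mul_of_one_le_right hw (h M hP)
        · exact mul_nonneg hw (mul_nonneg hK (prod_nonneg fun t _ => hg _))
    _ = K * (∑ v, rowWeight p v * g v) ^ m := by
        rw [← mul_sum, ← Fintype.prod_sum fun (_ : Fin m) v => rowWeight p v * g v, prod_const,
          card_univ, Fintype.card_fin]

def avoidingRows (I : Finset (Fin n)) (M : Fin m → Fin n → Bool) : Finset (Fin m) :=
  {t | Avoids I (M t)}

def Masked (I : Finset (Fin n)) (i : Fin n) (M : Fin m → Fin n → Bool) : Prop :=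
  ∀ t, Avoids I (M t) → M t i = false

lemma not_disjunct_iff {I : Finset (Fin n)} {M : Fin m → Fin n → Bool} :
    ¬ Disjunct I M ↔ ∃ i ∉ I, Masked I i M := by
  simp only [Disjunct, Masked, Avoids, not_forall, exists_prop]
  refine exists_congr fun i => and_congr_right fun _ => ?_
  simp only [not_exists, not_and]
  refine forall_congr' fun t => ?_
  cases M t i <;> simp

lemma ridProb_masked_le (hp0 : 0 < p) (hp1 : p ≤ 1) {I : Finset (Fin n)} {i : Fin n} (hi : i ∉ I)
    (y : ℝ) : ridProb m n p (fun M => Masked I i M ∧ y ≤ #(avoidingRows I M)) ≤ p ^ y := by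
  -- `g` has mean `1`, since a row avoids `insert i I` with probability `p ^ (#I + 1)`.
  set g : (Fin n → Bool) → ℝ := fun v =>
    (if Avoids (insert i I) v then p⁻¹ else 0) + if Avoids I v then 0 else 1
  have hsum : ∑ v, rowWeight p v * g v = 1 := by
    simp only [g, mul_add, sum_add_distrib, sum_rowWeight_mul_ite, card_insert_of_notMem hi]
    field_simp
    ring
  have hg : ∀ v, 0 ≤ g v := fun v => by positivity
  calc _ ≤ p ^ y * (∑ v, rowWeight p v * g v) ^ m :=
        ridProb_le_mul_pow hp0.le hp1 (rpow_nonneg hp0.le y) g hg ?_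
    _ = p ^ y := by rw [hsum, one_pow, mul_one]
  rintro M ⟨hM, hy⟩
  have hprod : ∏ t, g (M t) = p⁻¹ ^ #(avoidingRows I M) := by
    rw [avoidingRows, ← prod_const, prod_filter]
    refine prod_congr rfl fun t _ => ?_
    by_cases h : Avoids I (M t)
    · have h' : Avoids (insert i I) (M t) := by
        simpa [Avoids, hM t h] using h
      simp [g, h, h']
    · have h' : ¬ Avoids (insert i I) (M t) := fun h' => h fun j hj => h' j (mem_insert_of_mem hj)
      simp [g, h, h']
  rw [hprod, inv_pow, ← rpow_natCast, ← div_eq_mul_inv, ← rpow_sub hp0]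
  exact one_le_rpow_of_pos_of_le_one_of_nonpos hp0 hp1 (by linarith)

lemma ridProb_card_avoidingRows_le_exp (hp0 : 0 ≤ p) (hp1 : p ≤ 1) (I : Finset (Fin n)) {θ : ℝ}
    (hθ : 0 ≤ θ) (x : ℝ) :
    ridProb m n p (fun M => (#(avoidingRows I M) : ℝ) ≤ x) ≤
      exp (θ * x - m * p ^ #I * (1 - exp (-θ))) := by
  set g : (Fin n → Bool) → ℝ := fun v => if Avoids I v then exp (-θ) else 1
  have hsum : ∑ v, rowWeight p v * g v = 1 - p ^ #I * (1 - exp (-θ)) := by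
    rw [sum_rowWeight_mul_ite]
    ring
  have hsum0 : 0 ≤ ∑ v, rowWeight p v * g v :=
    sum_nonneg fun v _ => mul_nonneg (rowWeight_nonneg hp0 hp1 v) (by positivity)
  calc _ ≤ exp (θ * x) * (∑ v, rowWeight p v * g v) ^ m :=
        ridProb_le_mul_pow hp0 hp1 (exp_pos _).le g (fun v => by positivity) ?_
    _ ≤ exp (θ * x) * exp (-(p ^ #I * (1 - exp (-θ)))) ^ m := by
        gcongr
        rw [hsum]
        linarith [add_one_le_exp (-(p ^ #I * (1 - exp (-θ))))]
    _ = _ := by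
        rw [← exp_nat_mul, ← exp_add]
        ring_nf
  intro M hM
  have hprod : ∏ t, g (M t) = exp (-θ) ^ #(avoidingRows I M) := by
    rw [avoidingRows, ← prod_const, prod_filter]
  rw [hprod, ← exp_nat_mul, ← exp_add]
  exact one_le_exp (by nlinarith)

lemma ridProb_not_disjunct_le (hp0 : 0 < p) (hp1 : p ≤ 1) (I : Finset (Fin n)) (x : ℝ) :
    ridProb m n p (fun M => ¬ Disjunct I M) ≤
      ridProb m n p (fun M => (#(avoidingRows I M) : ℝ) ≤ x) + n * p ^ x := by
  have hmasked :
      ∑ i ∈ Iᶜ, ridProb m n p (fun M => Masked I i M ∧ x ≤ #(avoidingRows I M)) ≤ n * p ^ x :=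
    calc _ ≤ #Iᶜ * p ^ x := by
          simpa using sum_le_card_nsmul _ _ _ fun i hi =>
            ridProb_masked_le (m := m) hp0 hp1 (mem_compl.1 hi) x
      _ ≤ n * p ^ x := by
          gcongr
          exact_mod_cast (card_le_univ Iᶜ).trans_eq (Fintype.card_fin n)
  refine (ridProb_le_add hp0.le hp1 (R := fun M => ∃ i ∈ Iᶜ, Masked I i M ∧ x ≤ #(avoidingRows I M))
    fun M hM => ?_).trans
    (add_le_add le_rfl ((ridProb_le_sum hp0.le hp1 Iᶜ fun M hM => hM).trans hmasked))
  rcases le_total (#(avoidingRows I M) : ℝ) x with h | h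
  · exact Or.inl h
  · obtain ⟨i, hi, hmask⟩ := not_disjunct_iff.1 hM
    exact Or.inr ⟨i, mem_compl.2 hi, hmask, h⟩

lemma ridProb_card_avoidingRows_le_exp_neg (hp0 : 0 ≤ p) (hp1 : p ≤ 1) {I : Finset (Fin n)}
    (hI : exp (-1) ≤ p ^ #I) (hm : 0 < m) {x A : ℝ} (hx : 0 ≤ x) (hA : 0 ≤ A)
    (h : exp 1 * x ≤ m - √(2 * exp 1 * m * A)) :
    ridProb m n p (fun M => (#(avoidingRows I M) : ℝ) ≤ x) ≤ exp (-A) :=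
  (ridProb_card_avoidingRows_le_exp hp0 hp1 I (by positivity) x).trans <|
    exp_le_exp.2 (chernoff_exponent_le (by exact_mod_cast hm) hI hx hA h)

end Matrix

theorem rid_upper_bound (d n m : ℕ) (hd : 1 ≤ d) (hn : d < n) (δ : ℝ)
    (hδ : δ ∈ Set.Ioo (0 : ℝ) 1) (hm : 0 < m)
    (hm2 : (m : ℝ) - Real.sqrt (2 * Real.exp 1 * m * Real.log (2 / δ)) ≥
      Real.exp 1 * d * Real.log (2 * n / δ))
    (I : Finset (Fin n)) (hI : I.card ≤ d) :
    ridProb m n (Real.exp (-(1 : ℝ) / d)) (fun M => Disjunct I M) ≥ 1 - δ := by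
  obtain ⟨hδ0, hδ1⟩ := hδ
  have hd0 : (0 : ℝ) < d := by exact_mod_cast hd
  have hn1 : (1 : ℝ) ≤ n := by exact_mod_cast hd.trans hn.le
  set p := exp (-(1 : ℝ) / d) with hp
  set L := log (2 * n / δ)
  have hp1 : p ≤ 1 := exp_le_one_iff.2 (div_nonpos_of_nonpos_of_nonneg (by norm_num) hd0.le)
  have hc : exp (-1) ≤ p ^ #I := by
    rw [hp, ← exp_nat_mul, exp_le_exp, mul_div_assoc', le_div_iff₀ hd0]
    have : (#I : ℝ) ≤ d := by exact_mod_cast hI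
    linarith
  have hL : 0 ≤ L := log_nonneg (by rw [le_div_iff₀ hδ0]; linarith)
  have hA : 0 ≤ log (2 / δ) := log_nonneg (by rw [le_div_iff₀ hδ0]; linarith)
  have hfew : ridProb m n p (fun M => (#(avoidingRows I M) : ℝ) ≤ d * L) ≤ δ / 2 :=
    (ridProb_card_avoidingRows_le_exp_neg (exp_pos _).le hp1 hc hm (by positivity) hA
      (by rw [← mul_assoc]; exact hm2)).trans_eq (exp_neg_log_div two_pos hδ0)
  have hmasked : n * p ^ (d * L) = δ / 2 := by
    rw [hp, ← exp_mul, show -1 / (d : ℝ) * (d * L) = -L by field_simp,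
      exp_neg_log_div (by linarith) hδ0]
    field_simp
  linarith [ridProb_not_disjunct_le (m := m) (exp_pos _) hp1 I (d * L),
    ridProb_add_ridProb_not (m := m) (p := p) (fun M => Disjunct I M)]
end
end

section
/- For every integer d ≥ 1 there exists N such that for all integers n ≥ N the following holds: for every p ∈ [0,1], every positive integer m satisfying m + e³·√(3m) ≤ e·d·ln n, and every set I ⊆ {1,…,n} with |I| = d, the m×n RID random matrix M with parameter p fails to be (n,I)-disjunct with probability at least 1/3. -/
open scoped Classical

noncomputable section

open Finset Real

/-!
Write `A` for the columns of `M` indexed by `I` and `K` for the number of rows in which `A`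
vanishes. Given `A`, the matrix is disjunct iff each of the other `n - d` columns has a `1` in one
of these `K` rows, which happens with probability `(1 - p ^ K) ^ (n - d)`. The count `K` is
binomial with `m` trials and success probability `r = p ^ d`, so by Chebyshev's inequality
`K ≤ k₀ := m r + √(3 m r)` with probability at least `2 / 3`. Since `x e⁻ˣ ≤ e⁻¹`, both
`p ^ d log (1 / p)` and `p ^ (d / 2) log (1 / p)` are `O(1 / d)`, and the hypothesis on `m` then
gives `(n - d) p ^ k₀ ≥ 2`; on that event `(1 - p ^ K) ^ (n - d) ≤ e⁻² ≤ 1 / 3`. So the matrix is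
disjunct with probability at most `2 / 3`. For `p = 0` the matrix is the all-ones matrix.
-/

theorem sum_ite_forall_eq_prod_sum {ι β : Type*} [Fintype ι] [DecidableEq ι] [Fintype β]
    (P : ι → β → Prop) (g : ι → β → ℝ) :
    ∑ f : ι → β, (if ∀ i, P i (f i) then ∏ i, g i (f i) else 0) =
      ∏ i, ∑ b, if P i b then g i b else 0 := by
  rw [Fintype.prod_sum]
  exact sum_congr rfl fun f _ => Fintype.prod_ite_zero.symm

theorem sum_ite_lt_le_div_sq {α : Type*} [Fintype α] {w X : α → ℝ} (hw : ∀ a, 0 ≤ w a)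
    (μ : ℝ) {c : ℝ} (hc : 0 < c) :
    ∑ a, (if μ + c < X a then w a else 0) ≤ (∑ a, w a * (X a - μ) ^ 2) / c ^ 2 := by
  rw [le_div_iff₀ (by positivity), sum_mul]
  refine sum_le_sum fun a _ => ?_
  split_ifs with h
  · have : c ^ 2 ≤ (X a - μ) ^ 2 := by gcongr; linarith
    exact mul_le_mul_of_nonneg_left this (hw a)
  · rw [zero_mul]
    exact mul_nonneg (hw a) (sq_nonneg _)

theorem sum_mul_le_sum_ite_add {α : Type*} [Fintype α] {w f : α → ℝ} (P : α → Prop) {c : ℝ}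
    (hc : 0 ≤ c) (hw : ∀ a, 0 ≤ w a) (hf : ∀ a, f a ≤ 1) (hP : ∀ a, ¬ P a → f a ≤ c) :
    ∑ a, w a * f a ≤ ∑ a, (if P a then w a else 0) + c * ∑ a, w a := by
  rw [mul_sum, ← sum_add_distrib]
  refine sum_le_sum fun a _ => ?_
  split_ifs with h
  · nlinarith [hw a, hf a]
  · nlinarith [hw a, hP a h]

section RandomMatrix

variable {κ ι : Type*} [Fintype κ] [Fintype ι] {p : ℝ}

def bernWeight (p : ℝ) (c : κ → Bool) : ℝ := ∏ t, if c t then 1 - p else p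

def matWeight (p : ℝ) (A : ι → κ → Bool) : ℝ := ∏ j, bernWeight p (A j)

theorem bernWeight_nonneg (hp : p ∈ Set.Icc (0 : ℝ) 1) (c : κ → Bool) : 0 ≤ bernWeight p c :=
  prod_nonneg fun t _ => by split_ifs <;> linarith [hp.1, hp.2]

theorem matWeight_nonneg (hp : p ∈ Set.Icc (0 : ℝ) 1) (A : ι → κ → Bool) : 0 ≤ matWeight p A :=
  prod_nonneg fun j _ => bernWeight_nonneg hp (A j)

theorem matWeight_piEquivPiSubtypeProd_symm (q : ι → Prop) [DecidablePred q]
    (A : {j // q j} → κ → Bool) (B : {j // ¬ q j} → κ → Bool) :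
    matWeight p ((Equiv.piEquivPiSubtypeProd q fun _ => κ → Bool).symm (A, B)) =
      matWeight p A * matWeight p B := by
  rw [matWeight, ← Fintype.prod_subtype_mul_prod_subtype q]
  congr 1 <;> exact prod_congr rfl fun j _ => by simp [j.2]

variable [DecidableEq κ] [DecidableEq ι]

def matProb (p : ℝ) (E : (ι → κ → Bool) → Prop) : ℝ :=
  ∑ A, if E A then matWeight p A else 0

theorem sum_bernWeight : ∑ c : κ → Bool, bernWeight p c = 1 := by
  simp only [bernWeight]
  rw [← Fintype.prod_sum fun (_ : κ) (b : Bool) => if b then 1 - p else p]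
  simp

theorem sum_bernWeight_ite_forall_false (S : Finset κ) :
    ∑ c : κ → Bool, (if ∀ t ∈ S, c t = false then bernWeight p c else 0) = p ^ #S := by
  calc _ = ∏ t, ∑ b : Bool, if t ∈ S → b = false then (if b then 1 - p else p) else 0 := by
        simp only [bernWeight]
        convert sum_ite_forall_eq_prod_sum (fun t (b : Bool) => t ∈ S → b = false)
          (fun _ b => if b then 1 - p else p) using 5
    _ = ∏ t, if t ∈ S then p else 1 := by
        refine prod_congr rfl fun t _ => ?_
        by_cases ht : t ∈ S <;> simp [ht]
    _ = p ^ #S := by rw [Fintype.prod_ite_mem, prod_const]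

theorem sum_bernWeight_ite_exists_true (S : Finset κ) :
    ∑ c : κ → Bool, (if ∃ t ∈ S, c t = true then bernWeight p c else 0) = 1 - p ^ #S := by
  rw [← sum_bernWeight_ite_forall_false, eq_sub_iff_add_eq, ← sum_add_distrib,
    ← sum_bernWeight (κ := κ) (p := p)]
  refine sum_congr rfl fun c _ => ?_
  by_cases h : ∃ t ∈ S, c t = true <;> simp_all

theorem sum_matWeight : ∑ A : ι → κ → Bool, matWeight p A = 1 := by
  simp [matWeight, ← Fintype.prod_sum, sum_bernWeight]

theorem matProb_not (E : (ι → κ → Bool) → Prop) :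
    matProb p (fun A => ¬ E A) = 1 - matProb p E := by
  rw [eq_sub_iff_add_eq, matProb, matProb, ← sum_add_distrib,
    ← sum_matWeight (ι := ι) (κ := κ) (p := p)]
  exact sum_congr rfl fun A _ => by by_cases h : E A <;> simp [h]

theorem matProb_zero (E : (ι → κ → Bool) → Prop) :
    matProb 0 E = if E (fun _ _ => true) then 1 else 0 := by
  have hw (A : ι → κ → Bool) : matWeight 0 A = if A = fun _ _ => true then 1 else 0 := by
    simp [matWeight, bernWeight, Fintype.prod_boole, funext_iff]
  rw [matProb, Fintype.sum_eq_single (fun _ _ => true) fun A hA => by simp [hw, hA]]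
  simp [hw]

theorem matProb_comp_swap (E : (ι → κ → Bool) → Prop) :
    matProb p (fun N : κ → ι → Bool => E (Function.swap N)) = matProb p E := by
  refine Fintype.sum_equiv (Equiv.piComm fun _ _ => Bool) _ _ fun N => ?_
  simp only [matWeight, bernWeight]
  rw [prod_comm]
  rfl

theorem matProb_forall_exists_true (S : Finset κ) :
    matProb p (fun B : ι → κ → Bool => ∀ i, ∃ t ∈ S, B i t = true) =
      (1 - p ^ #S) ^ Fintype.card ι := by
  unfold matProb matWeight
  calc _ = ∏ _i : ι, ∑ c : κ → Bool, if ∃ t ∈ S, c t = true then bernWeight p c else 0 := by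
        convert sum_ite_forall_eq_prod_sum (fun (_ : ι) (c : κ → Bool) => ∃ t ∈ S, c t = true)
          (fun _ c => bernWeight p c) using 5
    _ = _ := by simp [sum_bernWeight_ite_exists_true]

def zeroRows (A : ι → κ → Bool) : Finset κ := {t | ∀ j, A j t = false}

theorem matProb_subset_zeroRows (S : Finset κ) :
    matProb p (fun A : ι → κ → Bool => S ⊆ zeroRows A) = (p ^ Fintype.card ι) ^ #S := by
  have hS (A : ι → κ → Bool) : S ⊆ zeroRows A ↔ ∀ j, ∀ t ∈ S, A j t = false := by
    simp only [subset_iff, zeroRows, mem_filter, mem_univ, true_and]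
    exact ⟨fun h j t ht => h ht j, fun h t ht j => h j t ht⟩
  simp_rw [matProb, matWeight, hS]
  calc _ = ∏ _i : ι, ∑ c : κ → Bool, if ∀ t ∈ S, c t = false then bernWeight p c else 0 := by
        convert sum_ite_forall_eq_prod_sum (fun (_ : ι) (c : κ → Bool) => ∀ t ∈ S, c t = false)
          (fun _ c => bernWeight p c) using 5
    _ = _ := by simp [sum_bernWeight_ite_forall_false, ← pow_mul, mul_comm]

theorem cast_card_eq_sum_ite (s : Finset κ) : (#s : ℝ) = ∑ t, if t ∈ s then 1 else 0 := by
  simp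

theorem sum_matWeight_mul_card_zeroRows :
    ∑ A : ι → κ → Bool, matWeight p A * #(zeroRows A) =
      Fintype.card κ * p ^ Fintype.card ι := by
  calc _ = ∑ t : κ, matProb p (fun A : ι → κ → Bool => {t} ⊆ zeroRows A) := by
        simp_rw [matProb, singleton_subset_iff, cast_card_eq_sum_ite, mul_sum, mul_ite, mul_one,
          mul_zero]
        exact sum_comm
    _ = _ := by
        simp only [matProb_subset_zeroRows, card_singleton, pow_one, sum_const, card_univ,
          nsmul_eq_mul]

theorem sum_matWeight_mul_card_zeroRows_sq :
    ∑ A : ι → κ → Bool, matWeight p A * #(zeroRows A) ^ 2 =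
      Fintype.card κ * p ^ Fintype.card ι +
        (Fintype.card κ ^ 2 - Fintype.card κ) * (p ^ Fintype.card ι) ^ 2 := by
  set r := p ^ Fintype.card ι
  calc _ = ∑ t : κ, ∑ t' : κ, matProb p (fun A : ι → κ → Bool => {t, t'} ⊆ zeroRows A) := by
        simp_rw [matProb, insert_subset_iff, singleton_subset_iff, sq, cast_card_eq_sum_ite,
          sum_mul_sum, mul_sum, ite_zero_mul_ite_zero, mul_ite, mul_one, mul_zero]
        rw [sum_comm]
        exact sum_congr rfl fun t _ => sum_comm
    _ = ∑ t : κ, ((r - r ^ 2) + ∑ _t' : κ, r ^ 2) := by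
        refine sum_congr rfl fun t _ => ?_
        simp_rw [matProb_subset_zeroRows]
        have hdiag : r - r ^ 2 = ∑ t', if t = t' then r - r ^ 2 else 0 := by simp
        rw [hdiag, ← sum_add_distrib]
        refine sum_congr rfl fun t' _ => ?_
        rcases eq_or_ne t t' with rfl | h
        · simp [r]
        · simp [r, card_pair h, h]
    _ = _ := by
        simp only [sum_const, card_univ, nsmul_eq_mul]
        ring

theorem sum_matWeight_mul_card_zeroRows_sub_sq :
    ∑ A : ι → κ → Bool,
        matWeight p A * (#(zeroRows A) - Fintype.card κ * p ^ Fintype.card ι) ^ 2 =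
      Fintype.card κ * p ^ Fintype.card ι * (1 - p ^ Fintype.card ι) := by
  set μ : ℝ := Fintype.card κ * p ^ Fintype.card ι
  calc _ = ∑ A : ι → κ → Bool, matWeight p A * #(zeroRows A) ^ 2
        - 2 * μ * ∑ A : ι → κ → Bool, matWeight p A * #(zeroRows A)
        + μ ^ 2 * ∑ A : ι → κ → Bool, matWeight p A := by
        simp_rw [mul_sum, ← sum_sub_distrib, ← sum_add_distrib]
        exact sum_congr rfl fun A _ => by ring
    _ = _ := by
        rw [sum_matWeight_mul_card_zeroRows_sq, sum_matWeight_mul_card_zeroRows, sum_matWeight]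
        ring

theorem matProb_card_zeroRows_gt_le_third [Nonempty κ] (hp0 : 0 < p) (hp1 : p ≤ 1) :
    matProb p (fun A : ι → κ → Bool =>
        Fintype.card κ * p ^ Fintype.card ι + √(3 * Fintype.card κ * p ^ Fintype.card ι) <
          #(zeroRows A)) ≤ 1 / 3 := by
  set r := p ^ Fintype.card ι
  have hr : 0 < r := by positivity
  have hκ : (0 : ℝ) < Fintype.card κ := by exact_mod_cast Fintype.card_pos
  calc _ ≤ (Fintype.card κ * r * (1 - r)) / √(3 * Fintype.card κ * r) ^ 2 := by
        rw [← sum_matWeight_mul_card_zeroRows_sub_sq]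
        exact sum_ite_lt_le_div_sq (matWeight_nonneg ⟨hp0.le, hp1⟩) _ (by positivity)
    _ ≤ 1 / 3 := by
        rw [sq_sqrt (by positivity), div_le_iff₀ (by positivity)]
        nlinarith [mul_pos hκ hr]

end RandomMatrix

theorem ridProb_eq_matProb (m n : ℕ) (p : ℝ) (pred : (Fin m → Fin n → Bool) → Prop) :
    ridProb m n p pred = matProb p pred := rfl

theorem disjunct_swap_piEquivPiSubtypeProd_symm_iff {m n : ℕ} {I : Finset (Fin n)}
    (A : I → Fin m → Bool) (B : {j // j ∉ I} → Fin m → Bool) :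
    Disjunct I (Function.swap ((Equiv.piEquivPiSubtypeProd (· ∈ I) fun _ => Fin m → Bool).symm
      (A, B))) ↔ ∀ i, ∃ t ∈ zeroRows A, B i t = true := by
  simp only [Disjunct, zeroRows, Function.swap, Equiv.piEquivPiSubtypeProd_symm_apply,
    mem_filter, mem_univ, true_and, Subtype.forall]
  refine forall₂_congr fun i hi => exists_congr fun t => ?_
  rw [dif_neg hi, and_comm]
  exact and_congr (forall₂_congr fun j hj => by rw [dif_pos hj]) Iff.rfl

theorem ridProb_disjunct_eq_sum (m n : ℕ) (p : ℝ) (I : Finset (Fin n)) :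
    ridProb m n p (Disjunct I) =
      ∑ A : I → Fin m → Bool, matWeight p A * (1 - p ^ #(zeroRows A)) ^ (n - #I) := by
  rw [ridProb_eq_matProb, ← matProb_comp_swap, matProb,
    ← (Equiv.piEquivPiSubtypeProd (· ∈ I) fun _ => Fin m → Bool).symm.sum_comp,
    Fintype.sum_prod_type]
  refine sum_congr rfl fun A _ => ?_
  simp_rw [disjunct_swap_piEquivPiSubtypeProd_symm_iff, matWeight_piEquivPiSubtypeProd_symm,
    ← mul_ite_zero, ← mul_sum]
  congr 1
  · congr!
  convert matProb_forall_exists_true (ι := {j // j ∉ I}) (zeroRows A) using 3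
  · exact sum_congr rfl fun B _ => by split_ifs <;> rfl
  · simp [Fintype.card_subtype_compl]

theorem one_sub_pow_le_third {x : ℝ} {N : ℕ} (hx : x ≤ 1) (h : 2 ≤ N * x) :
    (1 - x) ^ N ≤ 1 / 3 := by
  have hexp2 : 3 ≤ exp 2 := by linarith [add_one_le_exp 2]
  calc (1 - x) ^ N ≤ exp (-x) ^ N := pow_le_pow_left₀ (by linarith) (one_sub_le_exp_neg x) N
    _ = exp (-(N * x)) := by rw [← exp_nat_mul]; ring_nf
    _ ≤ exp (-2) := exp_le_exp.2 (by linarith)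
    _ ≤ 1 / 3 := by rw [exp_neg, one_div]; gcongr

theorem one_sub_rpow_pow_le_third {p k : ℝ} {N : ℕ} (hp0 : 0 < p) (hp1 : p ≤ 1) (hk : 0 ≤ k)
    (h : k * -log p + 1 ≤ log N) : (1 - p ^ k) ^ N ≤ 1 / 3 := by
  have hlogN : 1 ≤ log N := by nlinarith [log_nonpos hp0.le hp1]
  have hN : (0 : ℝ) < N := by
    by_contra hN
    rw [le_antisymm (not_lt.1 hN) N.cast_nonneg, log_zero] at hlogN
    linarith
  refine one_sub_pow_le_third (rpow_le_one hp0.le hp1 hk) ?_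
  calc (2 : ℝ) ≤ exp 1 := by linarith [add_one_le_exp 1]
    _ ≤ exp (log N + k * log p) := exp_le_exp.2 (by linarith)
    _ = N * p ^ k := by rw [exp_add, exp_log hN, rpow_def_of_pos hp0, mul_comm k]

theorem rpow_mul_neg_log_le {p a : ℝ} (hp : 0 < p) (ha : 0 < a) :
    p ^ a * -log p ≤ exp (-1) / a := by
  have hpa : p ^ a = exp (-(a * -log p)) := by rw [rpow_def_of_pos hp]; ring_nf
  rw [le_div_iff₀ ha]
  calc p ^ a * -log p * a = a * -log p * exp (-(a * -log p)) := by rw [hpa]; ring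
    _ ≤ exp (-1) := mul_exp_neg_le_exp_neg_one _

theorem mul_pow_add_sqrt_mul_neg_log_le {p m : ℝ} {d : ℕ} (hp : 0 < p) (hm : 0 ≤ m) (hd : 0 < d) :
    (m * p ^ d + √(3 * m * p ^ d)) * -log p ≤ (m + 2 * √(3 * m)) * exp (-1) / d := by
  have hd' : (0 : ℝ) < d := Nat.cast_pos.2 hd
  have hpow : p ^ d * -log p ≤ exp (-1) / d := by
    simpa [rpow_natCast] using rpow_mul_neg_log_le hp hd'
  have hsqrt : √(p ^ d) * -log p ≤ 2 * exp (-1) / d := by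
    have hroot : √(p ^ d) = p ^ ((d : ℝ) / 2) := by
      rw [sqrt_eq_rpow, ← rpow_natCast, ← rpow_mul hp.le]; ring_nf
    rw [hroot]
    convert rpow_mul_neg_log_le hp (half_pos hd') using 1
    field_simp
  calc (m * p ^ d + √(3 * m * p ^ d)) * -log p
      = m * (p ^ d * -log p) + √(3 * m) * (√(p ^ d) * -log p) := by
        rw [sqrt_mul (by positivity)]; ring
    _ ≤ m * (exp (-1) / d) + √(3 * m) * (2 * exp (-1) / d) := by gcongr
    _ = (m + 2 * √(3 * m)) * exp (-1) / d := by ring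

theorem add_two_sqrt_le {d m ℓ ℓ' : ℝ} (hd : 1 ≤ d) (hm : 0 ≤ m)
    (h : m + exp 1 ^ 3 * √(3 * m) ≤ exp 1 * d * ℓ) (hℓ : ℓ ≤ ℓ' + 1) (hℓ' : d + 1 ≤ ℓ') :
    m + 2 * √(3 * m) ≤ exp 1 * d * (ℓ' - 1) := by
  set s := √(3 * m)
  have hs : 0 ≤ s := sqrt_nonneg _
  have hs2 : s ^ 2 = 3 * m := sq_sqrt (by linarith)
  have he : 2.7 < exp 1 := lt_trans (by norm_num) exp_one_gt_d9
  have he' : exp 1 < 2.72 := lt_trans exp_one_lt_d9 (by norm_num)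
  have he3 : 2.7 ^ 3 < exp 1 ^ 3 := by gcongr
  have hℓd : exp 1 * d * ℓ ≤ exp 1 * d * (ℓ' + 1) := by gcongr
  have hℓd' : exp 1 * d * d ≤ exp 1 * d * (ℓ' - 1) := by gcongr; linarith
  rcases le_or_gt (d / 3) s with hsd | hsd
  · -- the excess `(e³ - 2) s` pays for the loss `2 e d`
    have : (exp 1 ^ 3 - 2) * (d / 3) ≤ (exp 1 ^ 3 - 2) * s := by gcongr; linarith
    nlinarith
  · -- `m < d² / 27` is small against `e d²`
    have hsq : s ^ 2 ≤ (d / 3) ^ 2 := by gcongr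
    have hdd : d ≤ d * d := by nlinarith
    have hed : 2.7 * (d * d) ≤ exp 1 * d * d := by nlinarith
    nlinarith

theorem log_le_log_sub_add_one {n d : ℝ} (hd : 0 ≤ d) (h : d < n - d) :
    log n ≤ log (n - d) + 1 := by
  have hnd : 0 < n - d := by linarith
  calc log n ≤ log ((n - d) * exp 1) :=
        log_le_log (by linarith) (by nlinarith [add_one_le_exp 1])
    _ = log (n - d) + 1 := by rw [log_mul hnd.ne' (exp_pos 1).ne', log_exp]

theorem not_disjunct_const_true {m n : ℕ} {I : Finset (Fin n)} {i : Fin n} (hI : I.Nonempty)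
    (hi : i ∉ I) : ¬ Disjunct I (fun (_ : Fin m) _ => true) := by
  obtain ⟨j, hj⟩ := hI
  intro h
  obtain ⟨t, -, ht⟩ := h i hi
  exact Bool.noConfusion (ht j hj)

theorem ridProb_disjunct_le_two_thirds {m n d : ℕ} {p : ℝ} {I : Finset (Fin n)} (hd : 0 < d)
    (hp0 : 0 < p) (hp1 : p ≤ 1) (hm : 0 < m) (hI : #I = d)
    (hcond : (m : ℝ) + exp 1 ^ 3 * √(3 * m) ≤ exp 1 * d * log n)
    (hn : exp (d + 1) ≤ (n : ℝ) - d) :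
    ridProb m n p (Disjunct I) ≤ 2 / 3 := by
  have hdn : (d : ℝ) < n - d := by linarith [add_one_le_exp (d + 1 : ℝ)]
  have hlog : (d : ℝ) + 1 ≤ log (n - d) := (le_log_iff_exp_le (by linarith)).2 hn
  set k₀ : ℝ := m * p ^ d + √(3 * m * p ^ d)
  have hk₀ : k₀ * -log p + 1 ≤ log (n - d) := by
    have h1 := mul_pow_add_sqrt_mul_neg_log_le hp0 m.cast_nonneg hd
    have h2 := add_two_sqrt_le (by exact_mod_cast hd) m.cast_nonneg hcond
      (log_le_log_sub_add_one d.cast_nonneg hdn) hlog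
    have hd' : (0 : ℝ) < d := by exact_mod_cast hd
    calc k₀ * -log p + 1 ≤ (m + 2 * √(3 * m)) * exp (-1) / d + 1 := by linarith
      _ ≤ exp 1 * d * (log (n - d) - 1) * exp (-1) / d + 1 := by gcongr
      _ = log (n - d) := by
        rw [exp_neg]; field_simp; ring
  have htail (A : I → Fin m → Bool) (hA : ¬ k₀ < #(zeroRows A)) :
      (1 - p ^ #(zeroRows A)) ^ (n - #I) ≤ 1 / 3 := by
    rw [← rpow_natCast p]
    refine one_sub_rpow_pow_le_third hp0 hp1 (Nat.cast_nonneg _) ?_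
    rw [Nat.cast_sub ((card_le_univ I).trans_eq (Fintype.card_fin n)), hI]
    nlinarith [log_nonpos hp0.le hp1]
  have hle_one (A : I → Fin m → Bool) : (1 - p ^ #(zeroRows A)) ^ (n - #I) ≤ 1 :=
    pow_le_one₀ (sub_nonneg.2 (pow_le_one₀ hp0.le hp1)) (sub_le_self _ (by positivity))
  have hcard : Fintype.card I = d := by simp [hI]
  have : NeZero m := ⟨hm.ne'⟩
  rw [ridProb_disjunct_eq_sum]
  calc _ ≤ matProb p (fun A : I → Fin m → Bool => k₀ < #(zeroRows A)) +
        1 / 3 * ∑ A : I → Fin m → Bool, matWeight p A :=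
        sum_mul_le_sum_ite_add _ (by norm_num) (matWeight_nonneg ⟨hp0.le, hp1⟩) hle_one htail
    _ ≤ 1 / 3 + 1 / 3 * 1 := by
        gcongr
        · have hcheb := matProb_card_zeroRows_gt_le_third (ι := I) (κ := Fin m) hp0 hp1
          rwa [hcard, Fintype.card_fin] at hcheb
        · rw [sum_matWeight]
    _ = 2 / 3 := by norm_num

theorem rid_lower_bound (d : ℕ) (hd : 1 ≤ d) :
    ∃ N : ℕ, ∀ n : ℕ, N ≤ n →
      ∀ p : ℝ, p ∈ Set.Icc (0 : ℝ) 1 →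
      ∀ m : ℕ, 0 < m →
        (m : ℝ) + Real.exp 1 ^ 3 * Real.sqrt (3 * m) ≤ Real.exp 1 * d * Real.log n →
        ∀ I : Finset (Fin n), I.card = d →
          ridProb m n p (fun M => ¬ Disjunct I M) ≥ 1 / 3 := by
  refine ⟨d + ⌈exp (d + 1)⌉₊, fun n hn p hp m hm hcond I hI => ?_⟩
  have hnd : exp (d + 1) ≤ (n : ℝ) - d := by
    have : ((d + ⌈exp (d + 1)⌉₊ : ℕ) : ℝ) ≤ n := by exact_mod_cast hn
    push_cast at this
    linarith [Nat.le_ceil (exp (d + 1))]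
  rw [ridProb_eq_matProb, matProb_not, ← ridProb_eq_matProb]
  rcases hp.1.eq_or_lt with rfl | hp0
  · have hdn : d < n := by exact_mod_cast (show (d : ℝ) < n by linarith [exp_pos (d + 1 : ℝ)])
    obtain ⟨i, -, hi⟩ := exists_mem_notMem_of_card_lt_card (s := I) (t := univ) (by simpa [hI])
    rw [ridProb_eq_matProb, matProb_zero,
      if_neg (not_disjunct_const_true (card_pos.1 (hI ▸ hd)) hi)]
    norm_num
  · linarith [ridProb_disjunct_le_two_thirds hd hp0 hp.2 hm hI hcond hnd]

end
end

section
/- Let m, n, s, d be positive integers with s ≤ m and d ≤ n, set α = s/m, and let I ⊆ {1,…,n} with |I| = d. Let M be an m×n RsSD random matrix with column weight s, and let X be the number of rows t ∈ {1,…,m} such that M_{t,j} = 0 for all j ∈ I. Then the variance of X satisfies Var[X] ≤ (1−α)^d · m. -/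
open scoped Classical

noncomputable section

/-- The weight (number of ones) of column `j` of a 0-1 matrix. -/
def colWeight {m n : ℕ} (M : Fin m → Fin n → Bool) (j : Fin n) : ℕ :=
  (Finset.univ.filter fun t => M t j = true).card

/-- The probability weight of a single matrix `M` under the RsSD model with column weight
`s`: the columns are chosen independently and uniformly from all 0-1 vectors in `{0,1}^m`
with exactly `s` ones. -/
def rssdWeight (m n s : ℕ) (M : Fin m → Fin n → Bool) : ℝ :=
  ∏ j : Fin n, (if colWeight M j = s then ((m.choose s : ℝ))⁻¹ else 0)

/-- The number of "good" rows of `M` with respect to `I`: rows with zero entries in all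
columns of `I`. -/
def goodRows {m n : ℕ} (I : Finset (Fin n)) (M : Fin m → Fin n → Bool) : ℕ :=
  (Finset.univ.filter fun t : Fin m => ∀ j ∈ I, M t j = false).card

/-
Write `X = ∑ₜ 1[row t vanishes on I]`. The columns are independent, and a uniform column of
weight `s` vanishes on a fixed set of `k` rows with probability `pₖ = C(m-k,s)/C(m,s)`. Hence
`E X = m p₁^d` and `E X² = m p₁^d + m(m-1) p₂^d`. Since `p₁ = 1 - s/m` and log-concavity of
`k ↦ C(k,s)` gives `p₂ ≤ p₁²`, `Var X ≤ m p₁^d - m p₁^(2d) ≤ m p₁^d`.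
-/

open Finset

theorem Nat.choose_sub_two_mul_choose_le_sq (m s : ℕ) :
    (m - 2).choose s * m.choose s ≤ (m - 1).choose s ^ 2 := by
  rcases m with _ | _ | n
  · simp [sq]
  · rcases s with _ | s <;> simp
  rw [show n + 2 - 2 = n by omega, show n + 2 - 1 = n + 1 by omega]
  rcases Nat.lt_or_ge (n + 1) s with hs | hs
  · simp [Nat.choose_eq_zero_of_lt (by omega : n < s)]
  obtain ⟨k, hk⟩ : ∃ k, n + 1 = s + k := ⟨n + 1 - s, by omega⟩
  have h₁ := Nat.choose_mul_succ_eq n s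
  have h₂ := Nat.choose_mul_succ_eq (n + 1) s
  rw [show n + 1 - s = k by omega] at h₁
  rw [show n + 1 + 1 - s = k + 1 by omega] at h₂
  refine Nat.le_of_mul_le_mul_right ?_ (Nat.mul_pos (Nat.succ_pos n) (Nat.succ_pos k))
  calc n.choose s * (n + 2).choose s * ((n + 1) * (k + 1))
      = (n.choose s * (n + 1)) * ((n + 1 + 1).choose s * (k + 1)) := by ring
    _ = (n + 1).choose s ^ 2 * (k * (n + 2)) := by rw [h₁, ← h₂]; ring
    _ ≤ (n + 1).choose s ^ 2 * ((n + 1) * (k + 1)) := Nat.mul_le_mul_left _ (by nlinarith)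

def columnAvoidProb (m s k : ℕ) : ℝ :=
  ((m - k).choose s : ℝ) / m.choose s

theorem columnAvoidProb_nonneg (m s k : ℕ) : 0 ≤ columnAvoidProb m s k := by
  unfold columnAvoidProb
  positivity

theorem columnAvoidProb_one {m s : ℕ} (hsm : s ≤ m) : columnAvoidProb m s 1 = 1 - s / m := by
  unfold columnAvoidProb
  rcases m with _ | n
  · obtain rfl : s = 0 := by omega
    simp
  have h := Nat.choose_mul_succ_eq n s
  rw [Nat.add_sub_cancel]
  have hpos : (0 : ℝ) < (n + 1).choose s := by exact_mod_cast Nat.choose_pos hsm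
  rw [← Nat.cast_inj (R := ℝ)] at h
  push_cast [Nat.cast_sub hsm] at h ⊢
  field_simp
  linarith

theorem columnAvoidProb_two_le_sq (m s : ℕ) :
    columnAvoidProb m s 2 ≤ columnAvoidProb m s 1 ^ 2 := by
  rw [columnAvoidProb, columnAvoidProb, div_pow]
  rcases (Nat.zero_le (m.choose s)).eq_or_lt with h | h
  · simp [← h]
  rw [div_le_div_iff₀ (by positivity) (by positivity), sq (m.choose s : ℝ), ← mul_assoc]
  gcongr
  exact_mod_cast Nat.choose_sub_two_mul_choose_le_sq m s

theorem card_boolVector_weight_avoiding (m s : ℕ) (A : Finset (Fin m)) :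
    #{v : Fin m → Bool | (∀ a ∈ A, v a = false) ∧ #{t | v t = true} = s} =
      (m - #A).choose s := by
  rw [show m - #A = #Aᶜ by simp [card_compl], ← card_powersetCard]
  refine card_bij' (fun v _ => ({t | v t = true} : Finset (Fin m))) (fun S _ t => decide (t ∈ S))
    ?_ ?_ ?_ ?_
  · intro v hv
    simp only [mem_filter, mem_univ, true_and] at hv
    refine mem_powersetCard.2 ⟨fun t ht => mem_compl.2 fun htA => ?_, hv.2⟩
    simp [hv.1 t htA] at ht
  · intro S hS
    obtain ⟨hSA, hS⟩ := mem_powersetCard.1 hS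
    simp only [mem_filter, mem_univ, true_and, decide_eq_true_eq, decide_eq_false_iff_not]
    exact ⟨fun a ha h => mem_compl.1 (hSA h) ha, by simpa using hS⟩
  · intro v _
    funext t
    simp
  · intro S _
    ext t
    simp

def rssdColumnWeight (m s : ℕ) (v : Fin m → Bool) : ℝ :=
  if #{t | v t = true} = s then ((m.choose s : ℝ))⁻¹ else 0

theorem sum_rssdColumnWeight_avoiding (m s : ℕ) (A : Finset (Fin m)) :
    ∑ v, rssdColumnWeight m s v * (if ∀ a ∈ A, v a = false then 1 else 0) =
      columnAvoidProb m s #A := by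
  simp only [rssdColumnWeight, mul_ite, mul_one, mul_zero, ← ite_and]
  rw [← sum_filter, sum_const, card_boolVector_weight_avoiding, nsmul_eq_mul, columnAvoidProb,
    div_eq_mul_inv]

theorem sum_rssdColumnWeight {m s : ℕ} (hsm : s ≤ m) : ∑ v, rssdColumnWeight m s v = 1 := by
  have h := sum_rssdColumnWeight_avoiding m s ∅
  simp only [notMem_empty, IsEmpty.forall_iff, implies_true, if_true, mul_one, card_empty] at h
  rw [h, columnAvoidProb, Nat.sub_zero, div_self (by exact_mod_cast (Nat.choose_pos hsm).ne')]

theorem sum_rssdWeight_mul_prod_columns (m n s : ℕ) (g : Fin n → (Fin m → Bool) → ℝ) :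
    ∑ M : Fin m → Fin n → Bool, rssdWeight m n s M * ∏ j, g j (fun t => M t j) =
      ∏ j, ∑ v, rssdColumnWeight m s v * g j v := by
  rw [Fintype.prod_sum fun j v => rssdColumnWeight m s v * g j v]
  refine Fintype.sum_equiv (Equiv.piComm fun _ _ => Bool) _ _ fun M => ?_
  rw [rssdWeight, ← prod_mul_distrib]
  rfl

theorem sum_rssdWeight_rowsAllZero {m n s : ℕ} (hsm : s ≤ m) (A : Finset (Fin m))
    (I : Finset (Fin n)) :
    ∑ M : Fin m → Fin n → Bool,
        rssdWeight m n s M * (if ∀ t ∈ A, ∀ j ∈ I, M t j = false then 1 else 0) =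
      columnAvoidProb m s #A ^ #I := by
  have hind (M : Fin m → Fin n → Bool) :
      (if ∀ t ∈ A, ∀ j ∈ I, M t j = false then (1 : ℝ) else 0) =
        ∏ j, if j ∈ I then (if ∀ t ∈ A, M t j = false then 1 else 0) else 1 := by
    rw [prod_ite_mem, univ_inter, prod_boole]
    congr 1
    exact propext ⟨fun h j hj t ht => h t ht j hj, fun h t ht j hj => h j hj t ht⟩
  have hcol (j : Fin n) :
      ∑ v, rssdColumnWeight m s v *
          (if j ∈ I then (if ∀ t ∈ A, v t = false then 1 else 0) else 1) =
        if j ∈ I then columnAvoidProb m s #A else 1 := by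
    split_ifs
    · exact sum_rssdColumnWeight_avoiding m s A
    · simpa using sum_rssdColumnWeight hsm
  simp_rw [hind]
  refine (sum_rssdWeight_mul_prod_columns m n s fun j v =>
    if j ∈ I then (if ∀ t ∈ A, v t = false then 1 else 0) else 1).trans ?_
  rw [prod_congr rfl fun j _ => hcol j, prod_ite_mem, univ_inter, prod_const]

theorem goodRows_eq_sum_ite {m n : ℕ} (I : Finset (Fin n)) (M : Fin m → Fin n → Bool) :
    (goodRows I M : ℝ) = ∑ t, if ∀ j ∈ I, M t j = false then 1 else 0 := by
  rw [goodRows, natCast_card_filter]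

theorem sum_rssdWeight_mul_goodRows {m n s : ℕ} (hsm : s ≤ m) (I : Finset (Fin n)) :
    ∑ M : Fin m → Fin n → Bool, rssdWeight m n s M * (goodRows I M : ℝ) =
      m * columnAvoidProb m s 1 ^ #I := by
  have hrow (t : Fin m) : ∑ M : Fin m → Fin n → Bool,
      rssdWeight m n s M * (if ∀ j ∈ I, M t j = false then 1 else 0) =
        columnAvoidProb m s 1 ^ #I := by
    simpa using sum_rssdWeight_rowsAllZero hsm {t} I
  simp_rw [goodRows_eq_sum_ite, mul_sum]
  rw [sum_comm, sum_congr rfl fun t _ => hrow t, sum_const, card_univ, Fintype.card_fin,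
    nsmul_eq_mul]

theorem sum_sum_ite_eq_diag (m : ℕ) (a b : ℝ) :
    ∑ t : Fin m, ∑ t' : Fin m, (if t = t' then a else b) = m * a + m * (m - 1) * b := by
  simp only [sum_ite, filter_ne, filter_eq, mem_univ, if_true, sum_const, card_singleton,
    card_erase_of_mem, card_univ, Fintype.card_fin, nsmul_eq_mul]
  rcases m with _ | m
  · simp
  · push_cast
    ring

theorem sum_rssdWeight_mul_goodRows_sq {m n s : ℕ} (hsm : s ≤ m) (I : Finset (Fin n)) :
    ∑ M : Fin m → Fin n → Bool, rssdWeight m n s M * (goodRows I M : ℝ) ^ 2 =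
      m * columnAvoidProb m s 1 ^ #I + m * (m - 1) * columnAvoidProb m s 2 ^ #I := by
  have hpair (t t' : Fin m) : ∑ M : Fin m → Fin n → Bool, rssdWeight m n s M *
        ((if ∀ j ∈ I, M t j = false then 1 else 0) *
          (if ∀ j ∈ I, M t' j = false then 1 else 0)) =
        if t = t' then columnAvoidProb m s 1 ^ #I else columnAvoidProb m s 2 ^ #I := by
    have h := sum_rssdWeight_rowsAllZero hsm {t, t'} I
    simp only [mem_insert, mem_singleton, forall_eq_or_imp, forall_eq] at h
    simp only [ite_zero_mul_ite_zero, mul_one, h]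
    split_ifs with htt
    · simp [htt]
    · rw [card_pair htt]
  simp_rw [goodRows_eq_sum_ite, sq, sum_mul_sum, mul_sum]
  rw [sum_comm, sum_congr rfl fun t _ => sum_comm, ← sum_sum_ite_eq_diag]
  exact sum_congr rfl fun t _ => sum_congr rfl fun t' _ => hpair t t'

theorem rssd_goodrows_variance_general (m n s d : ℕ) (hsm : s ≤ m)
    (I : Finset (Fin n)) (hI : I.card = d) :
    (∑ M : Fin m → Fin n → Bool, rssdWeight m n s M * (goodRows I M : ℝ) ^ 2) -
      (∑ M : Fin m → Fin n → Bool, rssdWeight m n s M * (goodRows I M : ℝ)) ^ 2 ≤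
    (1 - (s : ℝ) / m) ^ d * m := by
  rw [sum_rssdWeight_mul_goodRows_sq hsm, sum_rssdWeight_mul_goodRows hsm,
    ← columnAvoidProb_one hsm, ← hI]
  set p := columnAvoidProb m s 1 ^ #I
  have hp : 0 ≤ p := pow_nonneg (columnAvoidProb_nonneg m s 1) _
  have hq : columnAvoidProb m s 2 ^ #I ≤ p ^ 2 := by
    rw [← pow_mul, mul_comm, pow_mul]
    exact pow_le_pow_left₀ (columnAvoidProb_nonneg m s 2) (columnAvoidProb_two_le_sq m s) _
  have hm : (0 : ℝ) ≤ m * (m - 1) := by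
    rcases m with _ | m
    · simp
    · simp only [Nat.cast_succ, add_sub_cancel_right]
      positivity
  nlinarith [mul_le_mul_of_nonneg_left hq hm]

theorem rssd_goodrows_variance (m n s d : ℕ) (hm : 0 < m) (hn : 0 < n) (hs : 0 < s)
    (hd : 0 < d) (hsm : s ≤ m) (hdn : d ≤ n)
    (I : Finset (Fin n)) (hI : I.card = d) :
    (∑ M : Fin m → Fin n → Bool, rssdWeight m n s M * (goodRows I M : ℝ) ^ 2) -
      (∑ M : Fin m → Fin n → Bool, rssdWeight m n s M * (goodRows I M : ℝ)) ^ 2 ≤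
    (1 - (s : ℝ) / m) ^ d * m :=
  rssd_goodrows_variance_general m n s d hsm I hI

end
end

section
/- For each integer d ≥ 1 and each α ∈ (0,1], set β_d(α) = 1−(1−α)^d and F_d(α) = H(α) − β_d(α)·H(α/β_d(α)). Then d · sup_{α∈(0,1]} F_d(α) converges to ln 2 as d → ∞. -/
/-!
Write `β = 1 - (1 - α) ^ d`. In nats, `F_d(α) · log 2 = h(α) - β h(α / β)` with `h = binEntropy`,
and Jensen's inequality for `log` and for `x log x` at the points `(β - α) / β` and `1`, with
weights `β` and `1 - β` (mean `1 - α`), gives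
`α log (1 / β) ≤ h(α) - β h(α / β) ≤ α log ((1 - α) / (β - α))`.

For the upper bound put `u = 1 - α` and `w = u ^ (d - 1)`: then `(1 - α) / (β - α) = 1 / (1 - w)`
and `α ≤ -log u = -log w / (d - 1)`, so `(d - 1) F_d(α) log 2 ≤ log w · log (1 - w) ≤ (log 2) ^ 2`,
the maximum being at `w = 1 / 2`. For the lower bound take `1 - α = 2 ^ (-1 / d)`, so that
`β = 1 / 2` and `F_d(α) ≥ α ≥ log 2 / (d + log 2)`. Hence
`log 2 / (d + log 2) ≤ sup F_d ≤ log 2 / (d - 1)`.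
-/

noncomputable section

/-- The binary entropy function `H(x) = -x log₂ x - (1-x) log₂ (1-x)`
(with `H 0 = H 1 = 0`, by the convention `Real.log 0 = 0`). -/
def binH (x : ℝ) : ℝ := -x * Real.logb 2 x - (1 - x) * Real.logb 2 (1 - x)

open Real Filter Set

lemma binH_eq_binEntropy_div (x : ℝ) : binH x = binEntropy x / log 2 := by
  rw [binEntropy_eq_negMulLog_add_negMulLog_one_sub]
  simp only [binH, logb, negMulLog]
  ring

lemma mul_binEntropy_div (a b : ℝ) :
    b * binEntropy (a / b) = negMulLog a + negMulLog (b - a) - negMulLog b := by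
  rcases eq_or_ne b 0 with rfl | hb
  · simp [negMulLog, log_neg_eq_log]
  rw [binEntropy_eq_negMulLog_add_negMulLog_one_sub, one_sub_div hb, div_eq_mul_inv,
    div_eq_mul_inv, negMulLog_mul, negMulLog_mul]
  simp only [negMulLog, log_inv]
  field_simp
  ring

lemma binEntropy_sub_mul_binEntropy_div (a b : ℝ) :
    binEntropy a - b * binEntropy (a / b) =
      negMulLog (1 - a) + negMulLog b - negMulLog (b - a) := by
  rw [mul_binEntropy_div, binEntropy_eq_negMulLog_add_negMulLog_one_sub]
  ring

lemma mul_neg_log_le_binEntropy_sub {a b : ℝ} (hab : a ≤ b) (hb : 0 < b) (hb1 : b ≤ 1) :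
    a * -log b ≤ binEntropy a - b * binEntropy (a / b) := by
  have hjensen := concaveOn_negMulLog.2 (x := (b - a) / b) (y := 1)
    (mem_Ici.2 (div_nonneg (sub_nonneg.2 hab) hb.le)) (mem_Ici.2 zero_le_one) hb.le
    (sub_nonneg.2 hb1) (add_sub_cancel b 1)
  have hmean : b • ((b - a) / b) + (1 - b) • (1 : ℝ) = 1 - a := by
    simp only [smul_eq_mul]; field_simp; ring
  rw [hmean, smul_eq_mul, smul_eq_mul, negMulLog_one, mul_zero, add_zero] at hjensen
  have hscale : b * negMulLog ((b - a) / b) = negMulLog (b - a) + (b - a) * log b := by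
    rw [div_eq_mul_inv, negMulLog_mul]
    simp only [negMulLog, log_inv]
    field_simp
  rw [hscale] at hjensen
  rw [binEntropy_sub_mul_binEntropy_div]
  simp only [negMulLog] at hjensen ⊢
  linarith

lemma binEntropy_sub_le_mul_log {a b : ℝ} (hab : a < b) (hb : 0 < b) (hb1 : b ≤ 1) :
    binEntropy a - b * binEntropy (a / b) ≤ a * log ((1 - a) / (b - a)) := by
  have hba : 0 < b - a := sub_pos.2 hab
  have hjensen := strictConcaveOn_log_Ioi.concaveOn.2 (x := (b - a) / b) (y := 1)
    (mem_Ioi.2 (div_pos hba hb)) (mem_Ioi.2 zero_lt_one) hb.le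
    (sub_nonneg.2 hb1) (add_sub_cancel b 1)
  have hmean : b • ((b - a) / b) + (1 - b) • (1 : ℝ) = 1 - a := by
    simp only [smul_eq_mul]; field_simp; ring
  rw [hmean, smul_eq_mul, smul_eq_mul, log_one, mul_zero, add_zero,
    log_div hba.ne' hb.ne'] at hjensen
  rw [binEntropy_sub_mul_binEntropy_div, log_div (by linarith) hba.ne']
  simp only [negMulLog]
  nlinarith

lemma mul_log_le_one_sub_mul_log_one_sub {v : ℝ} (hv : 0 < v) (hv2 : v ≤ 1 / 2) :
    v * log v ≤ (1 - v) * log (1 - v) := by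
  have hanti := strictConcaveOn_log_Ioi.concaveOn.slope_anti (mem_Ioi.2 zero_lt_one)
    (a := v) (b := 1 - v) ⟨mem_Ioi.2 hv, (by linarith : v < 1).ne⟩
    ⟨mem_Ioi.2 (by linarith), (by linarith : 1 - v < 1).ne⟩ (by linarith)
  rw [slope_def_field, slope_def_field, log_one, sub_zero, sub_zero, sub_sub_cancel_left,
    div_neg, ← neg_div_neg_eq (log v), neg_sub, neg_div, neg_le_neg_iff,
    div_le_div_iff₀ (by linarith) hv] at hanti
  linarith

lemma hasDerivAt_log_mul_log_one_sub {v : ℝ} (hv : 0 < v) (hv1 : v < 1) :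
    HasDerivAt (fun x ↦ log x * log (1 - x)) (log (1 - v) / v - log v / (1 - v)) v := by
  refine ((hasDerivAt_log hv.ne').mul (((hasDerivAt_id v).const_sub 1).log
    (sub_pos.2 hv1).ne')).congr_deriv ?_
  simp only [id]
  ring

lemma monotoneOn_log_mul_log_one_sub :
    MonotoneOn (fun v ↦ log v * log (1 - v)) (Ioc 0 (1 / 2)) := by
  refine monotoneOn_of_deriv_nonneg (convex_Ioc _ _) ?_ ?_ ?_
  · exact fun v hv ↦ (hasDerivAt_log_mul_log_one_sub hv.1 (by linarith [hv.2])).continuousAt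
      |>.continuousWithinAt
  · rw [interior_Ioc]
    exact fun v hv ↦ (hasDerivAt_log_mul_log_one_sub hv.1 (by linarith [hv.2])).differentiableAt
      |>.differentiableWithinAt
  · rw [interior_Ioc]
    intro v ⟨hv, hv2⟩
    rw [(hasDerivAt_log_mul_log_one_sub hv (by linarith)).deriv, sub_nonneg,
      div_le_div_iff₀ (by linarith) hv]
    linarith [mul_log_le_one_sub_mul_log_one_sub hv hv2.le]

lemma log_mul_log_one_sub_le {v : ℝ} (hv : 0 < v) (hv1 : v < 1) :
    log v * log (1 - v) ≤ log 2 ^ 2 := by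
  have hhalf : log (1 / 2) * log (1 - 1 / 2) = log 2 ^ 2 := by
    rw [show (1 - 1 / 2 : ℝ) = 1 / 2 by norm_num, one_div, log_inv]; ring
  have hhalf_mem : (1 / 2 : ℝ) ∈ Ioc 0 (1 / 2) := by norm_num
  rcases le_total v (1 / 2) with h | h
  · exact hhalf ▸ monotoneOn_log_mul_log_one_sub ⟨hv, h⟩ hhalf_mem h
  · have := monotoneOn_log_mul_log_one_sub ⟨by linarith, by linarith⟩ hhalf_mem
      (show 1 - v ≤ 1 / 2 by linarith)
    simp only [sub_sub_cancel, hhalf] at this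
    linarith [mul_comm (log v) (log (1 - v))]

lemma le_one_sub_one_sub_pow {d : ℕ} (hd : d ≠ 0) {α : ℝ} (h0 : 0 ≤ α) (h1 : α ≤ 1) :
    α ≤ 1 - (1 - α) ^ d := by
  have := pow_le_pow_of_le_one (sub_nonneg.2 h1) (by linarith) (Nat.one_le_iff_ne_zero.2 hd)
  rw [pow_one] at this
  linarith

lemma lt_one_sub_one_sub_pow {d : ℕ} (hd : 2 ≤ d) {α : ℝ} (h0 : 0 < α) (h1 : α < 1) :
    α < 1 - (1 - α) ^ d := by
  have := pow_lt_pow_right_of_lt_one₀ (sub_pos.2 h1) (by linarith) (by omega : 1 < d)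
  rw [pow_one] at this
  linarith

lemma sub_one_mul_binEntropy_sub_le {d : ℕ} (hd : 2 ≤ d) {α : ℝ} (h0 : 0 < α) (h1 : α < 1) :
    ((d : ℝ) - 1) * (binEntropy α - (1 - (1 - α) ^ d) * binEntropy (α / (1 - (1 - α) ^ d)))
      ≤ log 2 ^ 2 := by
  set u := 1 - α
  have hu0 : 0 < u := sub_pos.2 h1
  have hw0 : 0 < u ^ (d - 1) := pow_pos hu0 _
  have hw1 : u ^ (d - 1) < 1 := pow_lt_one₀ hu0.le (by linarith) (by omega)
  have hsplit : (1 - u ^ d) - α = u * (1 - u ^ (d - 1)) := by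
    rw [mul_sub, ← pow_succ', Nat.sub_add_cancel (by omega : 1 ≤ d)]
    ring
  have hgap := binEntropy_sub_le_mul_log (lt_one_sub_one_sub_pow hd h0 h1)
    (by linarith [lt_one_sub_one_sub_pow hd h0 h1]) (by linarith [pow_pos hu0 d])
  rw [hsplit, div_mul_cancel_left₀ hu0.ne', log_inv] at hgap
  have hα : α ≤ -log u := by linarith [log_le_sub_one_of_pos hu0]
  have hlogw : log (u ^ (d - 1)) = ((d : ℝ) - 1) * log u := by
    rw [log_pow, Nat.cast_sub (by omega : 1 ≤ d), Nat.cast_one]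
  have hlog1w : 0 ≤ -log (1 - u ^ (d - 1)) := by
    linarith [log_nonpos (by linarith : 0 ≤ 1 - u ^ (d - 1)) (by linarith)]
  have hd1 : (0 : ℝ) ≤ (d : ℝ) - 1 := by
    have : (2 : ℝ) ≤ d := by exact_mod_cast hd
    linarith
  calc ((d : ℝ) - 1) * (binEntropy α - (1 - u ^ d) * binEntropy (α / (1 - u ^ d)))
      ≤ ((d : ℝ) - 1) * (α * -log (1 - u ^ (d - 1))) :=
        mul_le_mul_of_nonneg_left hgap hd1
    _ ≤ ((d : ℝ) - 1) * (-log u * -log (1 - u ^ (d - 1))) := by gcongr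
    _ = log (u ^ (d - 1)) * log (1 - u ^ (d - 1)) := by rw [hlogw]; ring
    _ ≤ log 2 ^ 2 := log_mul_log_one_sub_le hw0 hw1

def entropyGap (d : ℕ) (α : ℝ) : ℝ :=
  binH α - (1 - (1 - α) ^ d) * binH (α / (1 - (1 - α) ^ d))

lemma entropyGap_eq (d : ℕ) (α : ℝ) : entropyGap d α =
    (binEntropy α - (1 - (1 - α) ^ d) * binEntropy (α / (1 - (1 - α) ^ d))) / log 2 := by
  simp only [entropyGap, binH_eq_binEntropy_div]
  ring

lemma entropyGap_le {d : ℕ} (hd : 2 ≤ d) {α : ℝ} (hα : α ∈ Ioc 0 1) :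
    entropyGap d α ≤ log 2 / ((d : ℝ) - 1) := by
  have hd1 : (0 : ℝ) < (d : ℝ) - 1 := by
    have : (2 : ℝ) ≤ d := by exact_mod_cast hd
    linarith
  have hlog2 : 0 < log 2 := log_pos one_lt_two
  rw [le_div_iff₀ hd1, entropyGap_eq]
  rcases hα.2.eq_or_lt with rfl | hα1
  · simp [zero_pow (by omega : d ≠ 0), hlog2.le]
  rw [div_mul_eq_mul_div, div_le_iff₀ hlog2, mul_comm, ← sq]
  exact sub_one_mul_binEntropy_sub_le hd hα.1 hα1

lemma log_two_div_le_entropyGap {d : ℕ} (hd : d ≠ 0) :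
    log 2 / (d + log 2) ≤ entropyGap d (1 - exp (-(log 2 / d))) := by
  set t := log 2 / d
  have hlog2 : 0 < log 2 := log_pos one_lt_two
  have ht : 0 < t := div_pos hlog2 (Nat.cast_pos.2 (Nat.pos_of_ne_zero hd))
  have hβ : 1 - (1 - (1 - exp (-t))) ^ d = 1 / 2 := by
    rw [sub_sub_cancel, ← exp_nat_mul, mul_neg, mul_div_cancel₀ _ (Nat.cast_ne_zero.2 hd),
      exp_neg, exp_log two_pos]
    norm_num
  have hα : 1 - exp (-t) ≤ 1 - (1 - (1 - exp (-t))) ^ d :=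
    le_one_sub_one_sub_pow hd (by linarith [exp_le_one_iff.2 (neg_nonpos.2 ht.le)])
      (by linarith [exp_pos (-t)])
  have hgap := mul_neg_log_le_binEntropy_sub hα (by rw [hβ]; norm_num) (by rw [hβ]; norm_num)
  rw [hβ, one_div, log_inv, neg_neg, ← one_div] at hgap
  have hexp : exp (-t) ≤ (1 + t)⁻¹ := by
    rw [exp_neg]
    exact inv_anti₀ (by positivity) (by linarith [add_one_le_exp t])
  calc log 2 / (d + log 2) = 1 - (1 + t)⁻¹ := by
        field_simp
        linear_combination -(mul_div_cancel₀ (log 2) (Nat.cast_ne_zero.2 hd))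
    _ ≤ 1 - exp (-t) := by linarith
    _ ≤ entropyGap d (1 - exp (-t)) := by
        rw [entropyGap_eq, hβ, le_div_iff₀ hlog2]
        exact hgap

lemma sSup_entropyGap_mem_Icc {d : ℕ} (hd : 2 ≤ d) :
    sSup (entropyGap d '' Ioc 0 1) ∈ Icc (log 2 / (d + log 2)) (log 2 / ((d : ℝ) - 1)) := by
  have hbdd : ∀ y ∈ entropyGap d '' Ioc 0 1, y ≤ log 2 / ((d : ℝ) - 1) :=
    forall_mem_image.2 fun α hα ↦ entropyGap_le hd hα
  have ht : 0 < log 2 / d := div_pos (log_pos one_lt_two) (by positivity)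
  have hmem : 1 - exp (-(log 2 / d)) ∈ Ioc 0 1 :=
    ⟨sub_pos.2 (exp_lt_one_iff.2 (neg_lt_zero.2 ht)), by linarith [exp_pos (-(log 2 / d))]⟩
  exact ⟨(log_two_div_le_entropyGap (by omega)).trans
    (le_csSup ⟨_, hbdd⟩ (mem_image_of_mem _ hmem)),
    csSup_le ((nonempty_Ioc.2 one_pos).image _) hbdd⟩

theorem entropy_sup_asymptotics :
    Filter.Tendsto
      (fun d : ℕ => (d : ℝ) *
        sSup ((fun α : ℝ =>
          binH α - (1 - (1 - α) ^ d) * binH (α / (1 - (1 - α) ^ d))) ''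
            Set.Ioc (0 : ℝ) 1))
      Filter.atTop (nhds (Real.log 2)) := by
  have hlower := (tendsto_natCast_div_add_atTop (log 2)).const_mul (log 2)
  have hupper := (tendsto_natCast_div_add_atTop (-1 : ℝ)).const_mul (log 2)
  rw [mul_one] at hlower hupper
  refine tendsto_of_tendsto_of_tendsto_of_le_of_le' hlower hupper ?_ ?_ <;>
    filter_upwards [eventually_ge_atTop 2] with d hd <;>
    rw [mul_div_left_comm] <;>
    refine mul_le_mul_of_nonneg_left ?_ (Nat.cast_nonneg d)
  · exact (sSup_entropyGap_mem_Icc hd).1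
  · rw [← sub_eq_add_neg]
    exact (sSup_entropyGap_mem_Icc hd).2

end
end

section
/- For every real x > 0, x · ln(1/(1−e^{−x})) ≤ (ln 2)², with equality if and only if x = ln 2. -/
/-!
Substituting `t = exp (-x)` turns the left-hand side into `log t * log (1 - t)`, which is symmetric
under `t ↦ 1 - t`. Its derivative is `g (1 - t) - g t` with `g s = log s / (1 - s)`, and `-g s` is the
slope of the secant of `log` from `s` to `1`, strictly decreasing by strict concavity of `log`. So
`log t * log (1 - t)` strictly increases on `(0, 1/2]` and, by symmetry, has its strict maximum
`(log 2) ^ 2` at `t = 1/2`, i.e. at `x = log 2`.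
-/

open Real Set

lemma strictMonoOn_log_div_one_sub : StrictMonoOn (fun s : ℝ => log s / (1 - s)) (Ioo 0 1) := by
  intro x hx y hy hxy
  have hsecant := strictConcaveOn_log_Ioi.secant_strict_mono (a := 1) (mem_Ioi.2 one_pos) hx.1 hy.1
    hx.2.ne hy.2.ne hxy
  simp only [log_one, sub_zero] at hsecant
  rw [← neg_sub 1 x, ← neg_sub 1 y, div_neg, div_neg] at hsecant
  simpa only [neg_lt_neg_iff] using hsecant

lemma hasDerivAt_log_mul_log_one_sub_s11 {t : ℝ} (ht₀ : t ≠ 0) (ht₁ : t ≠ 1) :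
    HasDerivAt (fun s => log s * log (1 - s)) (log (1 - t) / t - log t / (1 - t)) t := by
  have hlog_sub := ((hasDerivAt_id t).const_sub 1).log (sub_ne_zero.2 ht₁.symm)
  refine ((hasDerivAt_log ht₀).mul hlog_sub).congr_deriv ?_
  simp only [id]
  ring

lemma strictMonoOn_log_mul_log_one_sub :
    StrictMonoOn (fun t : ℝ => log t * log (1 - t)) (Ioc 0 (1 / 2)) := by
  apply strictMonoOn_of_deriv_pos (convex_Ioc 0 (1 / 2))
  · refine ContinuousOn.mul (continuousOn_log.mono fun t ht => ht.1.ne') ?_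
    exact (continuousOn_log.comp (continuous_const.sub continuous_id).continuousOn)
      fun t ht => sub_ne_zero.2 (by linarith [ht.2] : (1 : ℝ) ≠ t)
  · intro t ht
    rw [interior_Ioc] at ht
    obtain ⟨ht₀, ht₁⟩ := ht
    rw [(hasDerivAt_log_mul_log_one_sub_s11 ht₀.ne' (by linarith)).deriv, sub_pos]
    have := strictMonoOn_log_div_one_sub ⟨ht₀, by linarith⟩ ⟨by linarith, by linarith⟩
      (by linarith : t < 1 - t)
    simpa only [sub_sub_cancel] using this

lemma log_half_mul_log_one_sub_half : log (1 / 2) * log (1 - 1 / 2) = log 2 ^ 2 := by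
  rw [show (1 : ℝ) - 1 / 2 = 1 / 2 by norm_num, one_div, log_inv]
  ring

lemma log_mul_log_one_sub_lt {t : ℝ} (ht : t ∈ Ioo 0 1) (hhalf : t ≠ 1 / 2) :
    log t * log (1 - t) < log 2 ^ 2 := by
  rw [← log_half_mul_log_one_sub_half]
  rcases hhalf.lt_or_gt with hlt | hgt
  · exact strictMonoOn_log_mul_log_one_sub ⟨ht.1, hlt.le⟩ ⟨by norm_num, le_rfl⟩ hlt
  · have hsymm : log t * log (1 - t) = log (1 - t) * log (1 - (1 - t)) := by
      rw [sub_sub_cancel, mul_comm]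
    rw [hsymm]
    exact strictMonoOn_log_mul_log_one_sub ⟨sub_pos.2 ht.2, by linarith⟩ ⟨by norm_num, le_rfl⟩
      (by linarith)

theorem xln_inequality (x : ℝ) (hx : 0 < x) :
    x * Real.log (1 / (1 - Real.exp (-x))) ≤ (Real.log 2) ^ 2 ∧
    (x * Real.log (1 / (1 - Real.exp (-x))) = (Real.log 2) ^ 2 ↔ x = Real.log 2) := by
  have hsubst : x * log (1 / (1 - exp (-x))) = log (exp (-x)) * log (1 - exp (-x)) := by
    rw [log_exp, one_div, log_inv]
    ring
  have ht : exp (-x) ∈ Ioo 0 1 := ⟨exp_pos _, exp_lt_one_iff.2 (neg_lt_zero.2 hx)⟩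
  have hhalf : exp (-x) = 1 / 2 ↔ x = log 2 := by
    rw [← exp_log (by norm_num : (0 : ℝ) < 1 / 2), exp_eq_exp, one_div, log_inv, neg_inj]
  rw [hsubst]
  rcases eq_or_ne x (log 2) with rfl | hx2
  · rw [hhalf.2 rfl, log_half_mul_log_one_sub_half]
    simp
  · have hlt := log_mul_log_one_sub_lt ht (mt hhalf.1 hx2)
    exact ⟨hlt.le, iff_of_false hlt.ne hx2⟩
end

section
/- Let q ≥ 2, d ≥ 1, m' ≥ 1, and n > d be integers and let δ ∈ (0,1). Assume m' ≥ ln(n/δ)/(−ln(1−(1−1/q)^d)). Let M' be an m'×n matrix with entries chosen independently and uniformly at random from [q] = {1,…,q}. Then for every set I ⊆ {1,…,n} with |I| ≤ d, with probability at least 1 − δ, for every column j ∉ I there exists a row i ∈ {1,…,m'} with M'_{i,j} ∉ {M'_{i,k} : k ∈ I} (that is, the associated binary q-transversal test matrix is (n,I)-disjunct). -/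
/-!
A row `f : [n] → [q]` separates a column `j ∉ I` from `I` iff `f j ∉ f '' I`. Counting the rows
fibrewise over the value `f j` shows that exactly a fraction `(1 - 1/q)^|I|` of them do, so a
uniformly random row fails for `j` with probability at most `p = 1 - (1 - 1/q)^d`. The rows of
the matrix are independent, so `j` is not separated by any row with probability at most `p^m'`,
and a union bound over the at most `n` columns `j ∉ I` gives failure probability `n p^m' ≤ δ`;
the last inequality is the hypothesis on `m'` after taking logarithms.
-/

open scoped Classical

noncomputable section

open Finset

theorem one_sub_one_div_natCast_mem_Icc (q : ℕ) : 1 - 1 / (q : ℝ) ∈ Set.Icc 0 1 := by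
  rcases q.eq_zero_or_pos with rfl | hq
  · simp
  · exact ⟨sub_nonneg.mpr (div_le_one_of_le₀ (by exact_mod_cast hq) (by positivity)),
      sub_le_self _ (by positivity)⟩

theorem mul_pow_le_one_of_log_div_neg_log_le {p x : ℝ} {m : ℕ} (hp₀ : 0 < p) (hp₁ : p < 1)
    (hx : 0 ≤ x) (hm : Real.log x / -Real.log p ≤ m) : x * p ^ m ≤ 1 := by
  rcases hx.eq_or_lt with rfl | hx
  · simp
  have hlog : Real.log x ≤ m * -Real.log p :=
    (div_le_iff₀ (neg_pos.mpr (Real.log_neg hp₀ hp₁))).mp hm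
  rw [← Real.log_nonpos_iff (by positivity), Real.log_mul hx.ne' (by positivity), Real.log_pow]
  linarith

theorem one_sub_one_sub_one_div_pow_mem_Ioo {q d : ℕ} (hq : 2 ≤ q) (hd : d ≠ 0) :
    1 - (1 - 1 / (q : ℝ)) ^ d ∈ Set.Ioo 0 1 := by
  have hq' : (1 : ℝ) < q := by exact_mod_cast hq
  have h₀ : 0 < 1 - 1 / (q : ℝ) := sub_pos.mpr ((div_lt_one (by positivity)).mpr hq')
  have h₁ : 1 - 1 / (q : ℝ) < 1 := sub_lt_self _ (by positivity)
  constructor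
  · linarith [pow_lt_one₀ h₀.le h₁ hd]
  · linarith [pow_pos h₀ d]

section Counting

variable {ι α β : Type*} [Fintype ι] [DecidableEq ι] [Fintype α] [DecidableEq α] [Fintype β]
  [DecidableEq β]

theorem card_filter_forall_apply_ne (I : Finset α) {j : α} (hj : j ∉ I) :
    #{f : α → β | ∀ k ∈ I, f j ≠ f k} =
      Fintype.card β *
        ((Fintype.card β - 1) ^ #I * Fintype.card β ^ (Fintype.card α - (#I + 1))) := by
  set T : β → α → Finset β := fun v k => if k = j then {v} else if k ∈ I then {v}ᶜ else univ
  have fiber (v : β) :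
      ({f : α → β | ∀ k ∈ I, f j ≠ f k} : Finset _).filter (· j = v) =
        Fintype.piFinset (T v) := by
    ext f
    simp only [mem_filter, mem_univ, true_and, Fintype.mem_piFinset, T]
    constructor
    · rintro ⟨hsep, rfl⟩ k
      split_ifs with hkj hkI
      · simp [hkj]
      · simpa [eq_comm] using hsep k hkI
      · exact mem_univ _
    · intro hf
      have hfj : f j = v := by simpa using hf j
      refine ⟨fun k hk => ?_, hfj⟩
      have hkj : k ≠ j := fun h => hj (h ▸ hk)
      simpa [hkj, hk, hfj, eq_comm] using hf k
  have card_fiber (v : β) : #(Fintype.piFinset (T v)) =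
      (Fintype.card β - 1) ^ #I * Fintype.card β ^ (Fintype.card α - (#I + 1)) := by
    rw [Fintype.card_piFinset, ← prod_mul_prod_compl (insert j I), prod_insert hj]
    have on_I : ∏ k ∈ I, #(T v k) = (Fintype.card β - 1) ^ #I :=
      prod_eq_pow_card fun k hk => by
        simp [T, show k ≠ j from fun h => hj (h ▸ hk), hk, card_compl]
    have off_I :
        ∏ k ∈ (insert j I)ᶜ, #(T v k) = Fintype.card β ^ (Fintype.card α - (#I + 1)) := by
      rw [prod_eq_pow_card (b := Fintype.card β), card_compl, card_insert_of_notMem hj]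
      intro k hk
      have : k ≠ j ∧ k ∉ I := by simpa using hk
      simp [T, this.1, this.2]
    rw [on_I, off_I]
    simp [T]
  rw [card_eq_sum_card_fiberwise (f := fun f => f j) (t := univ) (fun _ _ => mem_univ _)]
  simp only [fiber, card_fiber, sum_const, card_univ, smul_eq_mul]

theorem card_filter_exists_apply_eq_le [Nonempty β] (I : Finset α) {j : α} (hj : j ∉ I)
    {d : ℕ} (hI : #I ≤ d) :
    (#{f : α → β | ∃ k ∈ I, f j = f k} : ℝ) ≤
      (1 - (1 - 1 / Fintype.card β : ℝ) ^ d) * Fintype.card β ^ Fintype.card α := by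
  obtain ⟨r, hr⟩ : ∃ r, Fintype.card α = #I + 1 + r := Nat.exists_eq_add_of_le <| by
    simpa [card_insert_of_notMem hj] using card_le_univ (insert j I)
  have card_sep : (#{f : α → β | ∀ k ∈ I, f j ≠ f k} : ℝ) =
      (1 - 1 / Fintype.card β) ^ #I * Fintype.card β ^ Fintype.card α := by
    rw [card_filter_forall_apply_ne I hj, hr, Nat.add_sub_cancel_left]
    push_cast [Nat.cast_sub (Nat.one_le_iff_ne_zero.mpr Fintype.card_ne_zero)]
    rw [one_sub_div (by positivity), div_pow]
    field_simp
    ring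
  have hsplit : (#{f : α → β | ∃ k ∈ I, f j = f k} : ℝ) +
      #{f : α → β | ∀ k ∈ I, f j ≠ f k} = Fintype.card β ^ Fintype.card α := by
    have := card_filter_add_card_filter_not (s := (univ : Finset (α → β)))
      (fun f => ∃ k ∈ I, f j = f k)
    simp only [not_exists, not_and, card_univ, Fintype.card_fun] at this
    exact_mod_cast this
  have hmono : (1 - 1 / Fintype.card β : ℝ) ^ d ≤ (1 - 1 / Fintype.card β) ^ #I :=
    have hunit := one_sub_one_div_natCast_mem_Icc (Fintype.card β)
    pow_le_pow_of_le_one hunit.1 hunit.2 hI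
  rw [card_sep] at hsplit
  have hpow : (0 : ℝ) ≤ Fintype.card β ^ Fintype.card α := by positivity
  linarith [mul_le_mul_of_nonneg_right hmono hpow]

theorem card_filter_not_forall_exists_le_sum (I : Finset α) :
    #{M : ι → α → β | ¬ ∀ j ∉ I, ∃ i, ∀ k ∈ I, M i j ≠ M i k} ≤
      ∑ j ∈ Iᶜ, #{f : α → β | ∃ k ∈ I, f j = f k} ^ Fintype.card ι := by
  calc _ ≤ #(Iᶜ.biUnion fun j =>
          Fintype.piFinset fun _ : ι => {f : α → β | ∃ k ∈ I, f j = f k}) := by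
        refine card_le_card fun M hM => ?_
        simp only [mem_filter, mem_univ, true_and] at hM
        push Not at hM
        obtain ⟨j, hj, hrows⟩ := hM
        simp only [mem_biUnion, mem_compl, Fintype.mem_piFinset, mem_filter, mem_univ, true_and]
        exact ⟨j, hj, hrows⟩
    _ ≤ _ := card_biUnion_le.trans_eq <| by simp [Fintype.card_piFinset]

theorem card_filter_not_forall_exists_le [Nonempty β] (I : Finset α) {d : ℕ} (hI : #I ≤ d) :
    (#{M : ι → α → β | ¬ ∀ j ∉ I, ∃ i, ∀ k ∈ I, M i j ≠ M i k} : ℝ) ≤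
      Fintype.card α * (1 - (1 - 1 / Fintype.card β : ℝ) ^ d) ^ Fintype.card ι *
        Fintype.card β ^ (Fintype.card ι * Fintype.card α) := by
  set p := 1 - (1 - 1 / Fintype.card β : ℝ) ^ d
  have hunit := one_sub_one_div_natCast_mem_Icc (Fintype.card β)
  have hrow (j : α) (hj : j ∈ Iᶜ) :
      (#{f : α → β | ∃ k ∈ I, f j = f k} : ℝ) ^ Fintype.card ι ≤
        (p * Fintype.card β ^ Fintype.card α) ^ Fintype.card ι :=
    pow_le_pow_left₀ (Nat.cast_nonneg _) (card_filter_exists_apply_eq_le I (mem_compl.mp hj) hI) _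
  calc _ ≤ ∑ j ∈ Iᶜ, (#{f : α → β | ∃ k ∈ I, f j = f k} : ℝ) ^ Fintype.card ι := by
        exact_mod_cast card_filter_not_forall_exists_le_sum (ι := ι) (β := β) I
    _ ≤ #Iᶜ * (p * Fintype.card β ^ Fintype.card α) ^ Fintype.card ι := by
        simpa using sum_le_sum hrow
    _ ≤ _ := by
        rw [mul_pow, ← pow_mul, mul_comm (Fintype.card α), ← mul_assoc]
        gcongr
        · exact pow_nonneg (sub_nonneg.mpr (pow_le_one₀ hunit.1 hunit.2)) _
        · exact_mod_cast card_le_univ Iᶜ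

theorem card_filter_forall_exists_ge [Nonempty β] (I : Finset α) {d : ℕ} (hI : #I ≤ d) :
    (1 - Fintype.card α * (1 - (1 - 1 / Fintype.card β : ℝ) ^ d) ^ Fintype.card ι) *
        Fintype.card β ^ (Fintype.card ι * Fintype.card α) ≤
      #{M : ι → α → β | ∀ j ∉ I, ∃ i, ∀ k ∈ I, M i j ≠ M i k} := by
  have hsplit := card_filter_add_card_filter_not (s := (univ : Finset (ι → α → β)))
    (fun M => ∀ j ∉ I, ∃ i, ∀ k ∈ I, M i j ≠ M i k)
  rw [card_univ, Fintype.card_fun, Fintype.card_fun, ← pow_mul, mul_comm] at hsplit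
  have hsplit' := congrArg (Nat.cast : ℕ → ℝ) hsplit
  push_cast at hsplit'
  linarith [card_filter_not_forall_exists_le (ι := ι) (β := β) I hI]

end Counting

theorem utd_simple_upper_bound_general (q d m' n : ℕ) (hq : 2 ≤ q) (hd : 1 ≤ d)
    (δ : ℝ) (hδ : δ ∈ Set.Ioo (0 : ℝ) 1)
    (hm : (m' : ℝ) ≥ Real.log (n / δ) / (-Real.log (1 - (1 - 1 / (q : ℝ)) ^ d)))
    (I : Finset (Fin n)) (hI : I.card ≤ d) :
    ((Finset.univ.filter (fun M : Fin m' → Fin n → Fin q =>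
        ∀ j : Fin n, j ∉ I → ∃ i : Fin m', ∀ k ∈ I, M i j ≠ M i k)).card : ℝ) /
      (q : ℝ) ^ (m' * n) ≥ 1 - δ := by
  obtain ⟨hp₀, hp₁⟩ := one_sub_one_sub_one_div_pow_mem_Ioo hq (Nat.one_le_iff_ne_zero.mp hd)
  have hδ_bound : n * (1 - (1 - 1 / (q : ℝ)) ^ d) ^ m' ≤ δ := by
    have := mul_pow_le_one_of_log_div_neg_log_le hp₀ hp₁ (by positivity [hδ.1.le]) hm
    rwa [div_mul_eq_mul_div, div_le_one hδ.1] at this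
  have : NeZero q := ⟨by omega⟩
  have hgood := card_filter_forall_exists_ge (ι := Fin m') (β := Fin q) I hI
  simp only [Fintype.card_fin] at hgood
  rw [ge_iff_le, le_div_iff₀ (by positivity)]
  calc (1 - δ) * (q : ℝ) ^ (m' * n)
        ≤ (1 - n * (1 - (1 - 1 / (q : ℝ)) ^ d) ^ m') * q ^ (m' * n) := by gcongr
    _ ≤ _ := by convert hgood

theorem utd_simple_upper_bound (q d m' n : ℕ) (hq : 2 ≤ q) (hd : 1 ≤ d) (hm' : 1 ≤ m')
    (hn : d < n) (δ : ℝ) (hδ : δ ∈ Set.Ioo (0 : ℝ) 1)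
    (hm : (m' : ℝ) ≥ Real.log (n / δ) / (-Real.log (1 - (1 - 1 / (q : ℝ)) ^ d)))
    (I : Finset (Fin n)) (hI : I.card ≤ d) :
    ((Finset.univ.filter (fun M : Fin m' → Fin n → Fin q =>
        ∀ j : Fin n, j ∉ I → ∃ i : Fin m', ∀ k ∈ I, M i j ≠ M i k)).card : ℝ) /
      (q : ℝ) ^ (m' * n) ≥ 1 - δ :=
  utd_simple_upper_bound_general q d m' n hq hd δ hδ hm I hI

end
end

section
/- Let q ≥ 2 and d ≥ 1 be integers, and let v₁, …, v_d be chosen independently and uniformly at random from [q] = {1,…,q}. Let Y = |{σ ∈ [q] : σ ∉ {v₁,…,v_d}}| be the number of symbols of [q] not appearing among v₁,…,v_d. Then P[ |Y − q(1−1/q)^d| ≥ q^{2/3} ] ≤ q^{−1/3}·(1−1/q)^d. -/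
/-!
The number `Y` of missing symbols is a sum of indicators of the events "`σ` is missing", each of
probability `(1 - 1/q)^d`, so `𝔼 Y = q (1 - 1/q)^d`. Two distinct symbols are both missing with
probability `(1 - 2/q)^d ≤ (1 - 1/q)^(2d)`, so the indicators are negatively correlated and
`Var Y ≤ 𝔼 Y`. Chebyshev's inequality at deviation `q^(2/3)` then bounds the probability by
`𝔼 Y / q^(4/3) = q^(-1/3) (1 - 1/q)^d`. Probabilities are counted, i.e. multiplied by `q^d`.
-/

open Finset

lemma sum_card_filter_comm {β γ : Type*} [Fintype β] [Fintype γ] (r : β → γ → Prop)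
    [∀ b c, Decidable (r b c)] : ∑ b, #{c | r b c} = ∑ c, #{b | r b c} :=
  sum_card_bipartiteAbove_eq_sum_card_bipartiteBelow r

lemma sum_sub_sq_eq_of_sum_eq {β : Type*} [Fintype β] (f : β → ℝ) {μ : ℝ}
    (h : ∑ b, f b = Fintype.card β * μ) :
    ∑ b, (f b - μ) ^ 2 = ∑ b, f b ^ 2 - Fintype.card β * μ ^ 2 := by
  simp only [sub_sq, sum_add_distrib, sum_sub_distrib, ← sum_mul, ← mul_sum, h, sum_const,
    card_univ, nsmul_eq_mul]
  ring

lemma card_filter_le_abs_sub_mul_sq_le {β : Type*} [Fintype β] (f : β → ℝ) (c : ℝ) {t : ℝ}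
    (ht : 0 ≤ t) : #{b | t ≤ |f b - c|} * t ^ 2 ≤ ∑ b, (f b - c) ^ 2 := by
  calc (#{b | t ≤ |f b - c|} : ℝ) * t ^ 2 = ∑ b ∈ {b | t ≤ |f b - c|}, t ^ 2 := by
        rw [sum_const, nsmul_eq_mul]
    _ ≤ ∑ b ∈ {b | t ≤ |f b - c|}, (f b - c) ^ 2 := sum_le_sum fun b hb => by
        simpa only [sq_abs] using pow_le_pow_left₀ ht (mem_filter.mp hb).2 2
    _ ≤ ∑ b, (f b - c) ^ 2 :=
        sum_le_sum_of_subset_of_nonneg (subset_univ _) fun _ _ _ => sq_nonneg _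

lemma Nat.sub_two_mul_le_sub_one_sq (n : ℕ) : (n - 2) * n ≤ (n - 1) ^ 2 := by
  rcases n with _ | _ | n <;> simp
  nlinarith

lemma Nat.mul_sub_one_mul_sub_two_pow_mul_pow_le (n k : ℕ) :
    n * (n - 1) * (n - 2) ^ k * n ^ k ≤ (n * (n - 1) ^ k) ^ 2 :=
  calc n * (n - 1) * (n - 2) ^ k * n ^ k = n * (n - 1) * ((n - 2) * n) ^ k := by ring
    _ ≤ n * n * ((n - 1) ^ 2) ^ k := by
        gcongr
        · omega
        · exact Nat.sub_two_mul_le_sub_one_sq n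
    _ = (n * (n - 1) ^ k) ^ 2 := by ring

lemma natCast_mul_one_sub_inv_pow_mul_pow (n k : ℕ) :
    (n : ℝ) * (1 - 1 / n) ^ k * n ^ k = n * ((n - 1 : ℕ) : ℝ) ^ k := by
  rcases n.eq_zero_or_pos with rfl | hn
  · simp
  rw [mul_assoc, ← mul_pow, sub_mul, one_div_mul_cancel (by positivity), Nat.cast_sub hn]
  simp

section Missing

variable {ι α : Type*} [Fintype ι] [Fintype α] [DecidableEq α]

def missing (v : ι → α) : Finset α := {σ | σ ∉ image v univ}

lemma subset_missing_iff {v : ι → α} {s : Finset α} : s ⊆ missing v ↔ ∀ i, v i ∉ s := by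
  simp only [missing, subset_iff, mem_filter, mem_univ, true_and, mem_image, not_exists]
  exact ⟨fun h i hi => h hi i rfl, fun h σ hσ i hi => h i (hi ▸ hσ)⟩

lemma card_filter_subset_missing [DecidableEq ι] (s : Finset α) :
    #{v : ι → α | s ⊆ missing v} = (Fintype.card α - #s) ^ Fintype.card ι := by
  have : ({v : ι → α | s ⊆ missing v} : Finset _) = Fintype.piFinset fun _ => sᶜ := by
    ext v
    simp [subset_missing_iff, Fintype.mem_piFinset]
  rw [this, Fintype.card_piFinset, prod_const, card_univ, card_compl]

lemma sum_card_missing [DecidableEq ι] :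
    ∑ v : ι → α, #(missing v) = Fintype.card α * (Fintype.card α - 1) ^ Fintype.card ι := by
  calc ∑ v : ι → α, #(missing v) = ∑ v : ι → α, #{σ | σ ∈ missing v} := by
        simp only [filter_univ_mem]
    _ = ∑ σ : α, #{v : ι → α | σ ∈ missing v} := sum_card_filter_comm _
    _ = _ := by simp [← singleton_subset_iff, card_filter_subset_missing]

lemma sum_card_missing_sq [DecidableEq ι] :
    ∑ v : ι → α, #(missing v) ^ 2 = Fintype.card α * (Fintype.card α - 1) ^ Fintype.card ι +
      Fintype.card α * (Fintype.card α - 1) * (Fintype.card α - 2) ^ Fintype.card ι := by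
  set n := Fintype.card α
  have sum_pair (σ : α) : ∑ τ : α, (n - #{σ, τ}) ^ Fintype.card ι =
      (n - 1) ^ Fintype.card ι + (n - 1) * (n - 2) ^ Fintype.card ι := by
    rw [Fintype.sum_eq_add_sum_compl σ, pair_eq_singleton, card_singleton,
      sum_congr rfl fun τ hτ => by rw [card_pair (by simpa [eq_comm] using hτ)]]
    simp [card_compl, n]
  calc ∑ v : ι → α, #(missing v) ^ 2
        = ∑ v : ι → α, #{p : α × α | p ∈ missing v ×ˢ missing v} := by
        simp_rw [filter_univ_mem, card_product, sq]
    _ = ∑ p : α × α, #{v : ι → α | p ∈ missing v ×ˢ missing v} := sum_card_filter_comm _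
    _ = ∑ σ : α, ∑ τ : α, (n - #{σ, τ}) ^ Fintype.card ι := by
        rw [Fintype.sum_prod_type]
        congr! with σ _ τ _
        rw [← card_filter_subset_missing]
        simp [insert_subset_iff]
    _ = _ := by simp [sum_pair, n, mul_add, mul_assoc]

lemma sum_sq_card_missing_sub_le [DecidableEq ι] [Nonempty α] :
    ∑ v : ι → α, ((#(missing v) : ℝ) -
        Fintype.card α * (1 - 1 / (Fintype.card α : ℝ)) ^ Fintype.card ι) ^ 2 ≤
      Fintype.card α * (1 - 1 / (Fintype.card α : ℝ)) ^ Fintype.card ι *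
        (Fintype.card α : ℝ) ^ Fintype.card ι := by
  set n := Fintype.card α
  set k := Fintype.card ι
  set μ : ℝ := n * (1 - 1 / n) ^ k
  have hN : (0 : ℝ) < n ^ k := by
    have := Fintype.card_pos (α := α)
    positivity
  have hmean : μ * n ^ k = n * ((n - 1 : ℕ) : ℝ) ^ k := natCast_mul_one_sub_inv_pow_mul_pow n k
  have hsum : ∑ v : ι → α, (#(missing v) : ℝ) = Fintype.card (ι → α) * μ := by
    rw [Fintype.card_fun, Nat.cast_pow, mul_comm, hmean]
    exact_mod_cast sum_card_missing
  have hsum_sq : ∑ v : ι → α, (#(missing v) : ℝ) ^ 2 =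
      μ * n ^ k + n * ((n - 1 : ℕ) : ℝ) * ((n - 2 : ℕ) : ℝ) ^ k := by
    rw [hmean]
    exact_mod_cast sum_card_missing_sq
  have hcov : n * ((n - 1 : ℕ) : ℝ) * ((n - 2 : ℕ) : ℝ) ^ k ≤ n ^ k * μ ^ 2 := by
    refine le_of_mul_le_mul_right ?_ hN
    calc n * ((n - 1 : ℕ) : ℝ) * ((n - 2 : ℕ) : ℝ) ^ k * n ^ k ≤ (μ * n ^ k) ^ 2 := by
          rw [hmean]
          exact_mod_cast Nat.mul_sub_one_mul_sub_two_pow_mul_pow_le n k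
      _ = n ^ k * μ ^ 2 * n ^ k := by ring
  rw [sum_sub_sq_eq_of_sum_eq _ hsum, hsum_sq, Fintype.card_fun, Nat.cast_pow]
  linarith

end Missing

theorem missing_symbols_concentration_general (q d : ℕ) (hq : 2 ≤ q) :
    ((Finset.univ.filter (fun v : Fin d → Fin q =>
        |((Finset.univ.filter
            (fun σ : Fin q => σ ∉ Finset.image v Finset.univ)).card : ℝ) -
          (q : ℝ) * (1 - 1 / (q : ℝ)) ^ d| ≥ (q : ℝ) ^ ((2 : ℝ) / 3))).card : ℝ) /
      (q : ℝ) ^ d ≤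
    (q : ℝ) ^ (-(1 : ℝ) / 3) * (1 - 1 / (q : ℝ)) ^ d := by
  have : Nonempty (Fin q) := ⟨⟨0, by omega⟩⟩
  have hq0 : (0 : ℝ) < q := by positivity
  set t : ℝ := (q : ℝ) ^ ((2 : ℝ) / 3)
  have ht : (q : ℝ) ^ (-(1 : ℝ) / 3) * t ^ 2 = q := by
    rw [← Real.rpow_natCast, ← Real.rpow_mul hq0.le, ← Real.rpow_add hq0]
    norm_num
  have hchebyshev := card_filter_le_abs_sub_mul_sq_le
    (fun v : Fin d → Fin q => (#(missing v) : ℝ)) (q * (1 - 1 / q) ^ d) (by positivity : 0 ≤ t)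
  have hvariance := sum_sq_card_missing_sub_le (ι := Fin d) (α := Fin q)
  simp only [Fintype.card_fin] at hvariance
  rw [div_le_iff₀ (by positivity)]
  refine le_of_mul_le_mul_right ?_ (by positivity : 0 < t ^ 2)
  exact (hchebyshev.trans hvariance).trans_eq
    (by linear_combination (-(1 - 1 / (q : ℝ)) ^ d * q ^ d) * ht)

theorem missing_symbols_concentration (q d : ℕ) (hq : 2 ≤ q) (hd : 1 ≤ d) :
    ((Finset.univ.filter (fun v : Fin d → Fin q =>
        |((Finset.univ.filter
            (fun σ : Fin q => σ ∉ Finset.image v Finset.univ)).card : ℝ) -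
          (q : ℝ) * (1 - 1 / (q : ℝ)) ^ d| ≥ (q : ℝ) ^ ((2 : ℝ) / 3))).card : ℝ) /
      (q : ℝ) ^ d ≤
    (q : ℝ) ^ (-(1 : ℝ) / 3) * (1 - 1 / (q : ℝ)) ^ d :=
  missing_symbols_concentration_general q d hq
end

section
/- Let q and d be integers with q ≥ d ≥ 1, and let v₁, …, v_d be chosen independently and uniformly at random from [q] = {1,…,q}. Then the probability that the number of distinct symbols |{v₁,…,v_d}| is at most d/4 is at most 2^{−d}. -/
/-!
A function `v : [d] → [q]` with at most `k` distinct values takes all its values in some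
`k`-subset of `[q]`, so there are at most `C(q, k) k^d` of them. For `4k ≤ d ≤ q`, the bound
`C(q, k) k^k ≤ (e q)^k` gives
`C(q, k) k^d ≤ (2e)^k (q/2)^k k^(d-k) ≤ (q/2)^k (2k)^(d-k) ≤ (q/2)^d`,
using `(2e)^k ≤ 2^(3k) ≤ 2^(d-k)` and `4k ≤ q`.
-/

open Finset
open scoped Nat

theorem Nat.choose_mul_pow_self_le_exp_mul_pow (n k : ℕ) :
    (n.choose k : ℝ) * k ^ k ≤ (Real.exp 1 * n) ^ k := by
  have hk : (k : ℝ) ^ k / k ! ≤ Real.exp 1 ^ k := by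
    rw [← Real.exp_nat_mul, mul_one]
    exact Real.pow_div_factorial_le_exp _ (Nat.cast_nonneg k) k
  calc (n.choose k : ℝ) * k ^ k ≤ (n ^ k / k !) * k ^ k := by
        gcongr; exact Nat.choose_le_pow_div k n
    _ = n ^ k * (k ^ k / k !) := by ring
    _ ≤ n ^ k * Real.exp 1 ^ k := by gcongr
    _ = (Real.exp 1 * n) ^ k := by ring

theorem Nat.choose_mul_pow_le_half_pow {n k d : ℕ} (hkd : 4 * k ≤ d) (hdn : d ≤ n) :
    (n.choose k : ℝ) * k ^ d ≤ ((n : ℝ) / 2) ^ d := by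
  obtain ⟨m, rfl⟩ := Nat.exists_eq_add_of_le (show k ≤ d by omega)
  have h2e : (2 * Real.exp 1) ^ k ≤ 2 ^ m := calc
    (2 * Real.exp 1) ^ k ≤ (2 ^ 3) ^ k := by gcongr; linarith [Real.exp_one_lt_three]
    _ = 2 ^ (3 * k) := by rw [← pow_mul]
    _ ≤ 2 ^ m := pow_le_pow_right₀ (by norm_num) (by omega)
  have h4k : 2 * (k : ℝ) ≤ n / 2 := by
    have : (4 * k : ℝ) ≤ n := by exact_mod_cast hkd.trans hdn
    linarith
  calc (n.choose k : ℝ) * k ^ (k + m) = (n.choose k * k ^ k) * k ^ m := by ring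
    _ ≤ (Real.exp 1 * n) ^ k * k ^ m := by
        gcongr; exact Nat.choose_mul_pow_self_le_exp_mul_pow n k
    _ = (2 * Real.exp 1) ^ k * k ^ m * (n / 2) ^ k := by
        rw [mul_right_comm, ← mul_pow]; congr 2; ring
    _ ≤ 2 ^ m * k ^ m * (n / 2) ^ k := by gcongr
    _ = (2 * k) ^ m * (n / 2) ^ k := by ring
    _ ≤ (n / 2) ^ m * (n / 2) ^ k := by gcongr
    _ = (n / 2) ^ (k + m) := by ring

theorem card_filter_card_image_le {α β : Type*} [Fintype α] [DecidableEq α] [Fintype β]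
    [DecidableEq β] {k : ℕ} (hk : k ≤ Fintype.card β) :
    #{v : α → β | #(univ.image v) ≤ k} ≤ (Fintype.card β).choose k * k ^ Fintype.card α := by
  calc #{v : α → β | #(univ.image v) ≤ k}
      ≤ #((univ.powersetCard k).biUnion fun S : Finset β => Fintype.piFinset fun _ : α => S) := by
        refine card_le_card fun v hv => ?_
        obtain ⟨S, hvS, -, hSk⟩ :=
          exists_subsuperset_card_eq (subset_univ _) (mem_filter.1 hv).2 (by simpa using hk)
        simp only [mem_biUnion, mem_powersetCard, Fintype.mem_piFinset]
        exact ⟨S, ⟨subset_univ _, hSk⟩, fun i => hvS (mem_image_of_mem v (mem_univ i))⟩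
    _ ≤ #(univ.powersetCard k : Finset (Finset β)) * k ^ Fintype.card α :=
        card_biUnion_le_card_mul _ _ _ fun S hS => by
          rw [Fintype.card_piFinset, prod_const, card_univ, (mem_powersetCard.1 hS).2]
    _ = (Fintype.card β).choose k * k ^ Fintype.card α := by
        rw [card_powersetCard, card_univ]

theorem few_distinct_symbols_probability_general (q d : ℕ) (hqd : d ≤ q) :
    ((Finset.univ.filter (fun v : Fin d → Fin q =>
        ((Finset.image v Finset.univ).card : ℝ) ≤ (d : ℝ) / 4)).card : ℝ) /
      (q : ℝ) ^ d ≤ 1 / (2 : ℝ) ^ d := by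
  have hsmall (v : Fin d → Fin q) :
      ((#(univ.image v) : ℝ) ≤ d / 4 ↔ #(univ.image v) ≤ d / 4) := by
    rw [le_div_iff₀ (by norm_num), Nat.le_div_iff_mul_le (by norm_num)]
    exact_mod_cast Iff.rfl
  rw [filter_congr fun v _ => hsmall v]
  have hcount := card_filter_card_image_le (α := Fin d) (β := Fin q) (k := d / 4)
    (by simpa using (Nat.div_le_self d 4).trans hqd)
  simp only [Fintype.card_fin] at hcount
  apply div_le_of_le_mul₀ (by positivity) (by positivity)
  calc (#{v : Fin d → Fin q | #(univ.image v) ≤ d / 4} : ℝ)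
      ≤ q.choose (d / 4) * ((d / 4 : ℕ) : ℝ) ^ d := by exact_mod_cast hcount
    _ ≤ ((q : ℝ) / 2) ^ d := Nat.choose_mul_pow_le_half_pow (by omega) hqd
    _ = 1 / 2 ^ d * q ^ d := by rw [div_pow]; ring

theorem few_distinct_symbols_probability (q d : ℕ) (hqd : d ≤ q) (hd : 1 ≤ d) :
    ((Finset.univ.filter (fun v : Fin d → Fin q =>
        ((Finset.image v Finset.univ).card : ℝ) ≤ (d : ℝ) / 4)).card : ℝ) /
      (q : ℝ) ^ d ≤ 1 / (2 : ℝ) ^ d :=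
  few_distinct_symbols_probability_general q d hqd
end
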